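/- arXiv:1412.1540 — 4 statements merged into one kernel-verified Lean document; each statement's English description precedes it below -/
import Mathlib

section
/- Let Φ(t) be the fundamental matrix solution of the linear cyclic negative feedback system with Φ(0) = I, let 1 ≤ h ≤ (ñ+1)/2, and let Σ₀ ⊂ K_h be a linear subspace of ℝⁿ. For t ∈ ℝ let Σ_t = Φ(t)(Σ₀). Then dim Σ_t = dim Σ₀ for all t ∈ ℝ, and Σ_t ⊂ K_h for all t ≥ 0. -/
open Filter Topology

/-- δ₁ = −1 (index `0` in our 0-based indexing), δᵢ = 1 for the other indices. -/
def cyclicDelta (n : ℕ) [NeZero n] (i : Fin n) : ℝ := if i = 0 then -1 else 1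

/-- The set Λ of vectors with all coordinates nonzero. -/
def cyclicLambda (n : ℕ) [NeZero n] : Set (Fin n → ℝ) := {x | ∀ i, x i ≠ 0}

/-- The integer valued Lyapunov function `N(x) = card {i : δᵢ xᵢ x_{i−1} < 0}`
(cyclic indices, `x₀ = xₙ`). -/
noncomputable def cyclicN (n : ℕ) [NeZero n] (x : Fin n → ℝ) : ℕ :=
  Nat.card {i : Fin n // cyclicDelta n i * x i * x (i - 1) < 0}

/-- `N_m(x)`: the minimum of `N` over `U ∩ Λ` for all sufficiently small
neighborhoods `U` of `x`, i.e. the least value of `N` attained in every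
neighborhood of `x` within `Λ`. -/
noncomputable def cyclicNm (n : ℕ) [NeZero n] (x : Fin n → ℝ) : ℕ :=
  sInf {k | ∃ᶠ y in 𝓝[cyclicLambda n] x, cyclicN n y = k}

/-- `N_M(x)`: the maximum of `N` over `U ∩ Λ` for all sufficiently small
neighborhoods `U` of `x`. -/
noncomputable def cyclicNM (n : ℕ) [NeZero n] (x : Fin n → ℝ) : ℕ :=
  sSup {k | ∃ᶠ y in 𝓝[cyclicLambda n] x, cyclicN n y = k}

/-- The set 𝒩 on which `N` extends continuously. -/
def cyclicGood (n : ℕ) [NeZero n] : Set (Fin n → ℝ) :=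
  {x | cyclicNm n x = cyclicNM n x}

/-- ñ = n if n is odd, n − 1 if n is even. -/
def ntilde (n : ℕ) : ℕ := if n % 2 = 1 then n else n - 1

/-- A linear cyclic negative feedback system: coefficients `diag t i = a_{ii}(t)`
and `sub t i = a_{i,i−1}(t)` (cyclically, `sub t 0 = a_{1,n}(t)`), all continuous,
with `a_{1,n}(t) < 0` and `a_{i,i−1}(t) > 0` for `i ≠ 1`. -/
structure LinCNF (n : ℕ) [NeZero n] where
  diag : ℝ → Fin n → ℝ
  sub : ℝ → Fin n → ℝ
  cont_diag : ∀ i, Continuous fun t => diag t i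
  cont_sub : ∀ i, Continuous fun t => sub t i
  sub_neg : ∀ t, sub t 0 < 0
  sub_pos : ∀ t (i : Fin n), i ≠ 0 → 0 < sub t i

/-- `x` is a solution of the linear system `ẋᵢ = a_{ii}(t)xᵢ + a_{i,i−1}(t)x_{i−1}`. -/
def LinCNF.IsSolution {n : ℕ} [NeZero n] (S : LinCNF n) (x : ℝ → Fin n → ℝ) : Prop :=
  ∀ (t : ℝ) (i : Fin n),
    HasDerivAt (fun s => x s i) (S.diag t i * x t i + S.sub t i * x t (i - 1)) t

/-- `Φ` is the fundamental (matrix) solution, `Φ(0) = I`. -/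
def LinCNF.IsFundamental {n : ℕ} [NeZero n] (S : LinCNF n)
    (Φ : ℝ → (Fin n → ℝ) →ₗ[ℝ] (Fin n → ℝ)) : Prop :=
  Φ 0 = LinearMap.id ∧ ∀ x₀ : Fin n → ℝ, S.IsSolution fun t => Φ t x₀

/-- The cone `K_h = {0} ∪ {x : N_M(x) ≤ 2h − 1}`. -/
def Kcone (n : ℕ) [NeZero n] (h : ℕ) : Set (Fin n → ℝ) :=
  {0} ∪ {x | cyclicNM n x ≤ 2 * h - 1}

/-- The complementary cone `K^h = {0} ∪ {x : N_m(x) > 2h − 1}`. -/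
def KconeUp (n : ℕ) [NeZero n] (h : ℕ) : Set (Fin n → ℝ) :=
  {0} ∪ {x | 2 * h - 1 < cyclicNm n x}

/-!
A solution of a linear equation with continuous coefficients that vanishes at one time vanishes
identically, so every `Φ t` is injective and `dim Σ_t` is constant.

For the cone, `N_M(z)` is the largest `N(y)` over the `y ∈ Λ` having the sign of `z` wherever `z`
is nonzero, and `t ↦ N_M(x(t))` is antitone along every nonzero solution. Near `t₀`, a coordinate
with `xᵢ(t₀) = 0` has, by the integrating factor `exp (-∫ aᵢᵢ)`, the sign of `a_{i,i-1} x_{i-1}`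
just after `t₀` and the opposite sign just before; propagating this along each cyclic run of zeros
from the preceding nonzero coordinate puts `x(t)` in `Λ` for `t ≠ t₀` close to `t₀`. Just after
`t₀`, `x(t)` is one of the competitors defining `N_M(x(t₀))`. Just before, every term
`δᵢ xᵢ x_{i-1}` at a zero of `x(t₀)` is negative, and a competitor with this property realizes
the maximum.
-/

theorem antitone_of_eventually_nhdsGT_nhdsLT {α : Type*} [LinearOrder α] {f : ℝ → α}
    (hright : ∀ t, ∀ᶠ s in 𝓝[>] t, f s ≤ f t) (hleft : ∀ t, ∀ᶠ s in 𝓝[<] t, f t ≤ f s) :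
    Antitone f := by
  intro a b hab
  by_contra! hfab
  set B := {t | a ≤ t ∧ f a < f t}
  have hbB : b ∈ B := ⟨hab, hfab⟩
  have hB : BddBelow B := ⟨a, fun t ht => ht.1⟩
  have ha : a ≤ sInf B := le_csInf ⟨b, hbB⟩ fun t ht => ht.1
  rcases le_or_gt (f (sInf B)) (f a) with hinf | hinf
  · obtain ⟨u, hu, hfu⟩ := (mem_nhdsGT_iff_exists_Ioo_subset).1 (hright (sInf B))
    have : u ≤ sInf B := le_csInf ⟨b, hbB⟩ fun t ht => by
      by_contra! htu
      rcases (csInf_le hB ht).eq_or_lt with heq | hlt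
      · exact (heq ▸ hinf).not_gt ht.2
      · exact ((hfu ⟨hlt, htu⟩).trans hinf).not_gt ht.2
    exact (this.trans_lt hu).false
  · have hlt : a < sInf B := ha.lt_of_ne fun h => (h ▸ hinf).false
    obtain ⟨l, hl, hfl⟩ := (mem_nhdsLT_iff_exists_Ioo_subset).1 (hleft (sInf B))
    obtain ⟨s, hs₁, hs₂⟩ := exists_between (max_lt hlt hl)
    have hsB : s ∈ B := ⟨(le_max_left _ _).trans hs₁.le,
      hinf.trans_le (hfl ⟨(le_max_right _ _).trans_lt hs₁, hs₂⟩)⟩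
    exact (csInf_le hB hsB).not_gt hs₂

theorem eventually_pos_nhdsGT_of_deriv_pos {f : ℝ → ℝ} {a : ℝ} (hf : Continuous f)
    (hfa : f a = 0) (hf' : ∀ᶠ s in 𝓝[>] a, 0 < deriv f s) : ∀ᶠ s in 𝓝[>] a, 0 < f s := by
  obtain ⟨b, hab, hb⟩ := (mem_nhdsGT_iff_exists_Ioo_subset).1 hf'
  have hmono : StrictMonoOn f (Set.Icc a b) :=
    strictMonoOn_of_deriv_pos (convex_Icc a b) hf.continuousOn (by rwa [interior_Icc])
  filter_upwards [Ioo_mem_nhdsGT hab] with s hs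
  exact hfa ▸ hmono (Set.left_mem_Icc.2 hab.le) (Set.Ioo_subset_Icc_self hs) hs.1

theorem eventually_neg_nhdsLT_of_deriv_pos {f : ℝ → ℝ} {a : ℝ} (hf : Continuous f)
    (hfa : f a = 0) (hf' : ∀ᶠ s in 𝓝[<] a, 0 < deriv f s) : ∀ᶠ s in 𝓝[<] a, f s < 0 := by
  obtain ⟨b, hba, hb⟩ := (mem_nhdsLT_iff_exists_Ioo_subset).1 hf'
  have hmono : StrictMonoOn f (Set.Icc b a) :=
    strictMonoOn_of_deriv_pos (convex_Icc b a) hf.continuousOn (by rwa [interior_Icc])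
  filter_upwards [Ioo_mem_nhdsLT hba] with s hs
  exact hfa ▸ hmono (Set.Ioo_subset_Icc_self hs) (Set.right_mem_Icc.2 hba.le) hs.2

open Fin.NatCast in
theorem Fin.forall_of_imp_sub_one {n : ℕ} [NeZero n] {P : Fin n → Prop} {j : Fin n} (hj : P j)
    (h : ∀ i, P (i - 1) → P i) (i : Fin n) : P i := by
  have key : ∀ k : ℕ, P (j + k) := by
    intro k
    induction k with
    | zero => simpa using hj
    | succ k ih => exact h _ (by rwa [Nat.cast_succ, ← add_assoc, add_sub_cancel_right])
  simpa using key (i - j).val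

theorem eventually_nhds_mul_pos_of_ne_zero {n : ℕ} (z : Fin n → ℝ) :
    ∀ᶠ y in 𝓝 z, ∀ i, z i ≠ 0 → 0 < y i * z i := by
  refine eventually_all.2 fun i => ?_
  by_cases hi : z i = 0
  · simp [hi]
  · filter_upwards [(((continuous_apply i).mul continuous_const).tendsto z).eventually
      (lt_mem_nhds (mul_self_pos.2 hi))] with y hy _ using hy

theorem exists_eventually_pos_mul {n : ℕ} [NeZero n] {x : ℝ → Fin n → ℝ} {l : Filter ℝ} {t₀ : ℝ}
    (hl : l ≤ 𝓝 t₀) (hx : ContinuousAt x t₀) (hz : x t₀ ≠ 0)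
    (hstep : ∀ i c, x t₀ i = 0 → (∀ᶠ s in l, 0 < c * x s (i - 1)) →
      ∃ c', ∀ᶠ s in l, 0 < c' * x s i) (i : Fin n) :
    ∃ c, ∀ᶠ s in l, 0 < c * x s i := by
  have hnz : ∀ i, x t₀ i ≠ 0 → ∃ c, ∀ᶠ s in l, 0 < c * x s i := fun i hi =>
    ⟨x t₀ i, hl <| (hx.tendsto.eventually (eventually_nhds_mul_pos_of_ne_zero _)).mono
      fun s hs => mul_comm (x s i) _ ▸ hs i hi⟩
  obtain ⟨j, hj⟩ := Function.ne_iff.1 hz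
  refine Fin.forall_of_imp_sub_one (P := fun i => ∃ c, ∀ᶠ s in l, 0 < c * x s i) (hnz j hj)
    (fun i ⟨c, hc⟩ => ?_) i
  by_cases hi : x t₀ i = 0
  · exact hstep i c hi hc
  · exact hnz i hi

theorem eventually_mem_cyclicLambda {n : ℕ} [NeZero n] {x : ℝ → Fin n → ℝ} {l : Filter ℝ}
    (h : ∀ i, ∃ c, ∀ᶠ s in l, 0 < c * x s i) : ∀ᶠ s in l, x s ∈ cyclicLambda n :=
  eventually_all.2 fun i =>
    (h i).elim fun _ hc => hc.mono fun _ hs => right_ne_zero_of_mul hs.ne'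

section CyclicN

variable {n : ℕ} [NeZero n]

theorem cyclicDelta_mul_self (i : Fin n) : cyclicDelta n i * cyclicDelta n i = 1 := by
  unfold cyclicDelta; split_ifs <;> norm_num

theorem cyclicDelta_mul_mul_mul (i : Fin n) (a b c d : ℝ) :
    (cyclicDelta n i * a * b) * (cyclicDelta n i * c * d) = (a * c) * (b * d) := by
  linear_combination (a * c * b * d) * cyclicDelta_mul_self i

theorem cyclicDelta_mul_sub_pos (S : LinCNF n) (t : ℝ) (i : Fin n) :
    0 < cyclicDelta n i * S.sub t i := by
  unfold cyclicDelta
  split_ifs with h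
  · exact mul_pos_of_neg_of_neg (by norm_num) (h ▸ S.sub_neg t)
  · simpa using S.sub_pos t i h

theorem cyclicN_eq_card (y : Fin n → ℝ) :
    cyclicN n y = (Finset.univ.filter fun i => cyclicDelta n i * y i * y (i - 1) < 0).card := by
  rw [cyclicN, Nat.card_eq_fintype_card, Fintype.card_subtype]

theorem cyclicN_le (y : Fin n → ℝ) : cyclicN n y ≤ n :=
  (Finite.card_subtype_le _).trans (Nat.card_fin n).le

theorem cyclicN_congr {y w : Fin n → ℝ} (h : ∀ i, 0 < y i * w i) : cyclicN n y = cyclicN n w := by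
  simp only [cyclicN_eq_card]
  refine congrArg _ (Finset.filter_congr fun i _ => neg_iff_neg_of_mul_pos ?_)
  rw [cyclicDelta_mul_mul_mul]
  exact mul_pos (h i) (h (i - 1))

theorem cyclicN_le_cyclicNM {z y : Fin n → ℝ} (hy : y ∈ cyclicLambda n)
    (hyz : ∀ i, z i ≠ 0 → 0 < y i * z i) : cyclicN n y ≤ cyclicNM n z := by
  have hpos : ∀ s : ℝ, 0 < s → ∀ i, 0 < (z + s • y) i * y i := fun s hs i => by
    have : 0 ≤ y i * z i := by
      by_cases hi : z i = 0
      · simp [hi]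
      · exact (hyz i hi).le
    simp only [Pi.add_apply, Pi.smul_apply, smul_eq_mul]
    nlinarith [mul_pos hs (mul_self_pos.2 (hy i))]
  -- `z + s • y` has the sign pattern of `y` and tends to `z` as `s → 0⁺`
  have htends : Tendsto (fun s : ℝ => z + s • y) (𝓝[>] 0) (𝓝[cyclicLambda n] z) := by
    refine tendsto_nhdsWithin_iff.2 ⟨?_, ?_⟩
    · refine ((continuous_const.add (continuous_id.smul continuous_const)).tendsto' 0 z
        (by simp)).mono_left nhdsWithin_le_nhds
    · filter_upwards [self_mem_nhdsWithin] with s hs i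
      exact left_ne_zero_of_mul (hpos s hs i).ne'
  have hN : ∀ᶠ s in 𝓝[>] (0 : ℝ), cyclicN n (z + s • y) = cyclicN n y := by
    filter_upwards [self_mem_nhdsWithin] with s hs using cyclicN_congr (hpos s hs)
  exact le_csSup ⟨n, fun _ hk => hk.exists.elim fun y hy => hy ▸ cyclicN_le y⟩
    (htends.frequently hN.frequently)

theorem cyclicNM_le {z : Fin n → ℝ} {m : ℕ}
    (h : ∀ y ∈ cyclicLambda n, (∀ i, z i ≠ 0 → 0 < y i * z i) → cyclicN n y ≤ m) :
    cyclicNM n z ≤ m := by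
  refine csSup_le' fun k hk => ?_
  have hnear : ∀ᶠ y in 𝓝[cyclicLambda n] z,
      y ∈ cyclicLambda n ∧ ∀ i, z i ≠ 0 → 0 < y i * z i :=
    (eventually_mem_nhdsWithin).and (nhdsWithin_le_nhds (eventually_nhds_mul_pos_of_ne_zero z))
  obtain ⟨y, rfl, hy, hyz⟩ := (hk.and_eventually hnear).exists
  exact h y hy hyz

theorem cyclicNM_eq_cyclicN {y : Fin n → ℝ} (hy : y ∈ cyclicLambda n) :
    cyclicNM n y = cyclicN n y :=
  le_antisymm (cyclicNM_le fun _ _ hw => (cyclicN_congr fun i => hw i (hy i)).le)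
    (cyclicN_le_cyclicNM hy fun i _ => mul_self_pos.2 (hy i))

end CyclicN

section Combinatorics

variable {n : ℕ} [NeZero n]

theorem cyclicN_le_cyclicN_update_neg {y : Fin n → ℝ} {i : Fin n} (hi : i - 1 ≠ i)
    (hpos : 0 < cyclicDelta n i * y i * y (i - 1)) :
    cyclicN n y ≤ cyclicN n (Function.update y i (-y i)) := by
  classical
  set y' := Function.update y i (-y i)
  set A := Finset.univ.filter fun p => cyclicDelta n p * y p * y (p - 1) < 0
  set A' := Finset.univ.filter fun p => cyclicDelta n p * y' p * y' (p - 1) < 0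
  have hiA' : i ∈ A' := by
    simp only [A', y', Finset.mem_filter, Finset.mem_univ, true_and,
      Function.update_self, Function.update_of_ne hi]
    linarith
  have hsub : A ⊆ insert (i + 1) (A'.erase i) := fun p hp => by
    simp only [A, Finset.mem_filter, Finset.mem_univ, true_and] at hp
    rcases eq_or_ne p (i + 1) with rfl | hpi
    · exact Finset.mem_insert_self _ _
    have hp_ne : p ≠ i := by rintro rfl; linarith
    have hp1_ne : p - 1 ≠ i := fun h => hpi (sub_eq_iff_eq_add.1 h)
    simp only [A', y', Finset.mem_insert, Finset.mem_erase, Finset.mem_filter,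
      Finset.mem_univ, true_and, Function.update_of_ne hp_ne, Function.update_of_ne hp1_ne]
    exact Or.inr ⟨hp_ne, hp⟩
  rw [cyclicN_eq_card, cyclicN_eq_card]
  calc A.card ≤ (insert (i + 1) (A'.erase i)).card := Finset.card_le_card hsub
    _ ≤ (A'.erase i).card + 1 := Finset.card_insert_le _ _
    _ = A'.card := Finset.card_erase_add_one hiA'

theorem cyclicN_le_of_alternating {z τ : Fin n → ℝ} (hz : z ≠ 0) (hτ : τ ∈ cyclicLambda n)
    (hτz : ∀ i, z i ≠ 0 → 0 < τ i * z i)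
    (hτa : ∀ i, z i = 0 → cyclicDelta n i * τ i * τ (i - 1) < 0)
    {y : Fin n → ℝ} (hy : y ∈ cyclicLambda n) (hyz : ∀ i, z i ≠ 0 → 0 < y i * z i) :
    cyclicN n y ≤ cyclicN n τ := by
  classical
  obtain ⟨j, hj⟩ := Function.ne_iff.1 hz
  have hagree : ∀ {y : Fin n → ℝ}, (∀ i, z i ≠ 0 → 0 < y i * z i) →
      ∀ i, z i ≠ 0 → 0 < y i * τ i := fun hyz i hi => by
    nlinarith [mul_pos (hyz i hi) (hτz i hi), mul_self_pos.2 hi]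
  have hpos_of_not_neg : ∀ {y : Fin n → ℝ}, y ∈ cyclicLambda n → ∀ i,
      ¬ y i * τ i < 0 → 0 < y i * τ i := fun hy i =>
    (mul_ne_zero (hy i) (hτ i)).lt_or_gt.resolve_left
  induction hk : (Finset.univ.filter fun i => y i * τ i < 0).card generalizing y with
  | zero =>
    exact (cyclicN_congr fun i => hpos_of_not_neg hy i
      (Finset.filter_eq_empty_iff.1 (Finset.card_eq_zero.1 hk) (Finset.mem_univ i))).le
  | succ k ih =>
    -- flipping `y` where it starts to disagree with `τ` makes the term there count in `N`
    -- and can only uncount the next term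
    obtain ⟨i, hi, hi₁⟩ : ∃ i, y i * τ i < 0 ∧ 0 < y (i - 1) * τ (i - 1) := by
      by_contra! hnone
      have hall := Fin.forall_of_imp_sub_one (P := fun i => 0 < y i * τ i)
        (hagree hyz j hj) fun i hi₁ => hpos_of_not_neg hy i fun hi => (hnone i hi).not_gt hi₁
      obtain ⟨i, hi⟩ := Finset.card_pos.1 (hk ▸ k.succ_pos :
        0 < (Finset.univ.filter fun i => y i * τ i < 0).card)
      exact (hall i).not_gt (Finset.mem_filter.1 hi).2
    have hzi : z i = 0 := by
      by_contra hzi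
      exact (hagree hyz i hzi).not_gt hi
    have hi_ne : i - 1 ≠ i := by rintro h; rw [h] at hi₁; linarith
    set y' := Function.update y i (-y i)
    have hstep : cyclicN n y ≤ cyclicN n y' := by
      refine cyclicN_le_cyclicN_update_neg hi_ne (pos_of_mul_neg_left ?_ (hτa i hzi).le)
      rw [cyclicDelta_mul_mul_mul]
      exact mul_neg_of_neg_of_pos hi hi₁
    refine hstep.trans (ih (y := y') (fun p => ?_) (fun p hp => ?_) ?_)
    · rcases eq_or_ne p i with rfl | hp
      · simpa [y'] using hy p
      · simpa [y', hp] using hy p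
    · have hp_ne : p ≠ i := by rintro rfl; exact hp hzi
      simpa [y', hp_ne] using hyz p hp
    · have hfilter : (Finset.univ.filter fun p => y' p * τ p < 0) =
          (Finset.univ.filter fun p => y p * τ p < 0).erase i := by
        ext p
        rcases eq_or_ne p i with rfl | hp
        · simpa [y'] using hi.le
        · simp [y', hp]
      rw [hfilter, Finset.card_erase_of_mem (by simpa using hi), hk, Nat.add_sub_cancel]

end Combinatorics

namespace LinCNF

variable {n : ℕ} [NeZero n] (S : LinCNF n)

noncomputable def field (t : ℝ) : (Fin n → ℝ) →L[ℝ] (Fin n → ℝ) :=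
  ContinuousLinearMap.pi fun i =>
    S.diag t i • ContinuousLinearMap.proj i + S.sub t i • ContinuousLinearMap.proj (i - 1)

theorem continuous_field : Continuous S.field :=
  continuous_clm_apply.2 fun _ => continuous_pi fun i =>
    ((S.cont_diag i).mul continuous_const).add ((S.cont_sub i).mul continuous_const)

theorem sub_mul_sub_pos (t t' : ℝ) (i : Fin n) : 0 < S.sub t i * S.sub t' i := by
  by_cases h : i = 0
  · exact h ▸ mul_pos_of_neg_of_neg (S.sub_neg t) (S.sub_neg t')
  · exact mul_pos (S.sub_pos t i h) (S.sub_pos t' i h)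

variable {S} {x : ℝ → Fin n → ℝ}

theorem IsSolution.hasDerivAt (hx : S.IsSolution x) (t : ℝ) :
    HasDerivAt x (S.field t (x t)) t :=
  hasDerivAt_pi.2 (hx t)

theorem IsSolution.continuous (hx : S.IsSolution x) : Continuous x :=
  continuous_iff_continuousAt.2 fun t => (hx.hasDerivAt t).continuousAt

theorem IsSolution.eventuallyEq_zero (hx : S.IsSolution x) {t₀ : ℝ} (h : x t₀ = 0) :
    x =ᶠ[𝓝 t₀] 0 := by
  have hlip : ∀ᶠ t in 𝓝 t₀,
      LipschitzOnWith (‖S.field t₀‖₊ + 1) (S.field t) Set.univ := by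
    filter_upwards [(S.continuous_field.nnnorm.tendsto t₀).eventually
      (gt_mem_nhds (lt_add_one ‖S.field t₀‖₊))] with t ht
    exact ((S.field t).lipschitz.weaken ht.le).lipschitzOnWith
  refine ODE_solution_unique_of_eventually hlip (.of_forall fun t => ⟨hx.hasDerivAt t, trivial⟩)
    (.of_forall fun t => ⟨?_, trivial⟩) h
  simp

theorem IsSolution.eq_zero (hx : S.IsSolution x) {t₀ : ℝ} (h : x t₀ = 0) (t : ℝ) : x t = 0 := by
  have hclopen : IsClopen {t | x t = 0} :=
    ⟨isClosed_eq hx.continuous continuous_const,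
      isOpen_iff_mem_nhds.2 fun _ ht => hx.eventuallyEq_zero ht⟩
  exact Set.eq_univ_iff_forall.1 (hclopen.eq_univ ⟨t₀, h⟩) t

theorem IsSolution.hasDerivAt_integratingFactor (hx : S.IsSolution x) (i : Fin n)
    (t₀ k s : ℝ) :
    HasDerivAt (fun s => Real.exp (-∫ r in t₀..s, S.diag r i) * (k * x s i))
      (Real.exp (-∫ r in t₀..s, S.diag r i) * k * (S.sub s i * x s (i - 1))) s := by
  have hA : HasDerivAt (fun s => ∫ r in t₀..s, S.diag r i) (S.diag s i) s :=
    intervalIntegral.integral_hasDerivAt_right ((S.cont_diag i).intervalIntegrable _ _)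
      ((S.cont_diag i).stronglyMeasurableAtFilter _ _) (S.cont_diag i).continuousAt
  exact (hA.neg.exp.mul ((hx s i).const_mul k)).congr_deriv (by simp only [Pi.neg_apply]; ring)

/-- The integrating factor `exp (-∫_{t₀}^s aᵢᵢ)` removes the diagonal term of `ẋᵢ`, so that the
derivative has the sign of `a_{i,i-1} x_{i-1}`. -/
theorem IsSolution.integratingFactor_spec (hx : S.IsSolution x) {t₀ : ℝ} {i : Fin n}
    (hi : x t₀ i = 0) (c : ℝ) :
    let f := fun s => Real.exp (-∫ r in t₀..s, S.diag r i) * (S.sub t₀ i * c * x s i)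
    Continuous f ∧ f t₀ = 0 ∧ ∀ s, 0 < c * x s (i - 1) → 0 < deriv f s := by
  have hf := hx.hasDerivAt_integratingFactor i t₀ (S.sub t₀ i * c)
  refine ⟨continuous_iff_continuousAt.2 fun s => (hf s).continuousAt, by simp [hi],
    fun s hs => (hf s).deriv ▸ ?_⟩
  calc 0 < Real.exp (-∫ r in t₀..s, S.diag r i) * (S.sub t₀ i * S.sub s i) * (c * x s (i - 1)) :=
        mul_pos (mul_pos (Real.exp_pos _) (S.sub_mul_sub_pos t₀ s i)) hs
    _ = _ := by ring

theorem IsSolution.eventually_pos_nhdsGT_of_eq_zero (hx : S.IsSolution x) {t₀ : ℝ} {i : Fin n}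
    (hi : x t₀ i = 0) {c : ℝ} (hc : ∀ᶠ s in 𝓝[>] t₀, 0 < c * x s (i - 1)) :
    ∀ᶠ s in 𝓝[>] t₀, 0 < S.sub t₀ i * c * x s i := by
  obtain ⟨hcont, hzero, hderiv⟩ := hx.integratingFactor_spec hi c
  filter_upwards [eventually_pos_nhdsGT_of_deriv_pos hcont hzero (hc.mono hderiv)] with s hs
  exact pos_of_mul_pos_right hs (Real.exp_pos _).le

theorem IsSolution.eventually_neg_nhdsLT_of_eq_zero (hx : S.IsSolution x) {t₀ : ℝ} {i : Fin n}
    (hi : x t₀ i = 0) {c : ℝ} (hc : ∀ᶠ s in 𝓝[<] t₀, 0 < c * x s (i - 1)) :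
    ∀ᶠ s in 𝓝[<] t₀, S.sub t₀ i * c * x s i < 0 := by
  obtain ⟨hcont, hzero, hderiv⟩ := hx.integratingFactor_spec hi c
  filter_upwards [eventually_neg_nhdsLT_of_deriv_pos hcont hzero (hc.mono hderiv)] with s hs
  exact neg_of_mul_neg_right hs (Real.exp_pos _).le

theorem IsSolution.exists_eventually_pos_mul_nhdsGT (hx : S.IsSolution x) {t₀ : ℝ}
    (hz : x t₀ ≠ 0) (i : Fin n) : ∃ c, ∀ᶠ s in 𝓝[>] t₀, 0 < c * x s i :=
  exists_eventually_pos_mul nhdsWithin_le_nhds hx.continuous.continuousAt hz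
    (fun _ _ hi hc => ⟨_, hx.eventually_pos_nhdsGT_of_eq_zero hi hc⟩) i

theorem IsSolution.exists_eventually_pos_mul_nhdsLT (hx : S.IsSolution x) {t₀ : ℝ}
    (hz : x t₀ ≠ 0) (i : Fin n) : ∃ c, ∀ᶠ s in 𝓝[<] t₀, 0 < c * x s i :=
  exists_eventually_pos_mul nhdsWithin_le_nhds hx.continuous.continuousAt hz
    (fun i c hi hc => ⟨-(S.sub t₀ i * c), (hx.eventually_neg_nhdsLT_of_eq_zero hi hc).mono
      fun _ hs => by rw [neg_mul]; exact neg_pos.2 hs⟩) i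

theorem IsSolution.eventually_alternating_nhdsLT (hx : S.IsSolution x) {t₀ : ℝ}
    (hz : x t₀ ≠ 0) :
    ∀ᶠ s in 𝓝[<] t₀, ∀ i, x t₀ i = 0 → cyclicDelta n i * x s i * x s (i - 1) < 0 := by
  refine eventually_all.2 fun i => ?_
  by_cases hi : x t₀ i = 0
  · obtain ⟨c, hc⟩ := hx.exists_eventually_pos_mul_nhdsLT hz (i - 1)
    filter_upwards [hc, hx.eventually_neg_nhdsLT_of_eq_zero hi hc] with s hcs hs _
    refine neg_of_mul_neg_left (b := cyclicDelta n i * S.sub t₀ i * (c * c)) ?_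
      (mul_nonneg (cyclicDelta_mul_sub_pos S t₀ i).le (mul_self_nonneg c))
    rw [cyclicDelta_mul_mul_mul]
    calc _ = (S.sub t₀ i * c * x s i) * (c * x s (i - 1)) := by ring
      _ < 0 := mul_neg_of_neg_of_pos hs hcs
  · exact .of_forall fun _ h => absurd h hi

theorem IsSolution.eventually_cyclicNM_le_nhdsGT (hx : S.IsSolution x) {t₀ : ℝ}
    (hz : x t₀ ≠ 0) : ∀ᶠ s in 𝓝[>] t₀, cyclicNM n (x s) ≤ cyclicNM n (x t₀) := by
  filter_upwards [eventually_mem_cyclicLambda (hx.exists_eventually_pos_mul_nhdsGT hz),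
    nhdsWithin_le_nhds (hx.continuous.tendsto t₀ |>.eventually
      (eventually_nhds_mul_pos_of_ne_zero _))] with s hs hsign
  rw [cyclicNM_eq_cyclicN hs]
  exact cyclicN_le_cyclicNM hs hsign

theorem IsSolution.eventually_cyclicNM_ge_nhdsLT (hx : S.IsSolution x) {t₀ : ℝ}
    (hz : x t₀ ≠ 0) : ∀ᶠ s in 𝓝[<] t₀, cyclicNM n (x t₀) ≤ cyclicNM n (x s) := by
  filter_upwards [eventually_mem_cyclicLambda (hx.exists_eventually_pos_mul_nhdsLT hz),
    nhdsWithin_le_nhds (hx.continuous.tendsto t₀ |>.eventually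
      (eventually_nhds_mul_pos_of_ne_zero _)), hx.eventually_alternating_nhdsLT hz]
    with s hs hsign halt
  rw [cyclicNM_eq_cyclicN hs]
  exact cyclicNM_le fun _ hy hyz => cyclicN_le_of_alternating hz hs hsign halt hy hyz

theorem IsSolution.antitone_cyclicNM (hx : S.IsSolution x) {t₁ : ℝ} (hx₁ : x t₁ ≠ 0) :
    Antitone fun t => cyclicNM n (x t) :=
  have hz : ∀ t, x t ≠ 0 := fun _ h => hx₁ (hx.eq_zero h t₁)
  antitone_of_eventually_nhdsGT_nhdsLT (fun t => hx.eventually_cyclicNM_le_nhdsGT (hz t))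
    fun t => hx.eventually_cyclicNM_ge_nhdsLT (hz t)

end LinCNF

theorem stmt6_general (n : ℕ) [NeZero n] (S : LinCNF n)
    (Φ : ℝ → (Fin n → ℝ) →ₗ[ℝ] (Fin n → ℝ)) (hΦ : S.IsFundamental Φ)
    (h : ℕ)
    (Sig0 : Submodule ℝ (Fin n → ℝ)) (hSig0 : (Sig0 : Set (Fin n → ℝ)) ⊆ Kcone n h) :
    (∀ t : ℝ, Module.finrank ℝ (Sig0.map (Φ t)) = Module.finrank ℝ Sig0) ∧
    (∀ t : ℝ, 0 ≤ t → ((Sig0.map (Φ t) : Submodule ℝ (Fin n → ℝ)) : Set (Fin n → ℝ)) ⊆ Kcone n h) := by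
  obtain ⟨hΦ₀, hsol⟩ := hΦ
  have hΦ₀_apply : ∀ v, Φ 0 v = v := fun v => by simp [hΦ₀]
  have hinj : ∀ t, Function.Injective (Φ t) := fun t =>
    (injective_iff_map_eq_zero (Φ t)).2 fun v hv => hΦ₀_apply v ▸ (hsol v).eq_zero hv 0
  refine ⟨fun t => (Submodule.equivMapOfInjective (Φ t) (hinj t) Sig0).finrank_eq.symm, ?_⟩
  rintro t ht _ ⟨v, hv, rfl⟩
  rcases eq_or_ne v 0 with rfl | hv0
  · exact Or.inl (map_zero (Φ t))
  refine Or.inr (show cyclicNM n (Φ t v) ≤ 2 * h - 1 from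
    le_trans ?_ ((hSig0 hv).resolve_left hv0))
  simpa only [hΦ₀_apply] using (hsol v).antitone_cyclicNM (t₁ := 0) (by rwa [hΦ₀_apply]) ht

/-- If `Sig0 ⊆ K_h` is a linear subspace, its image `Σ_t` under
the fundamental solution operator has the same dimension for all `t`, and stays
inside `K_h` for `t ≥ 0`. -/
theorem stmt6 (n : ℕ) [NeZero n] (hn : 2 ≤ n) (S : LinCNF n)
    (Φ : ℝ → (Fin n → ℝ) →ₗ[ℝ] (Fin n → ℝ)) (hΦ : S.IsFundamental Φ)
    (h : ℕ) (h1 : 1 ≤ h) (h2 : h ≤ (ntilde n + 1) / 2)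
    (Sig0 : Submodule ℝ (Fin n → ℝ)) (hSig0 : (Sig0 : Set (Fin n → ℝ)) ⊆ Kcone n h) :
    (∀ t : ℝ, Module.finrank ℝ (Sig0.map (Φ t)) = Module.finrank ℝ Sig0) ∧
    (∀ t : ℝ, 0 ≤ t → ((Sig0.map (Φ t) : Submodule ℝ (Fin n → ℝ)) : Set (Fin n → ℝ)) ⊆ Kcone n h) :=
  stmt6_general n S Φ hΦ h Sig0 hSig0
end

section
/- Suppose n is even and let A be the n × n real matrix with A_{i,i−1} = 1 for 2 ≤ i ≤ n, A_{1,n} = −1, and all other entries 0. Then there exist n/2 linear subspaces E₁, …, E_{n/2} of ℝⁿ, each of dimension 2 and each invariant under A (A E_k ⊂ E_k), such that every nonzero vector ξ ∈ E_k satisfies ξ ∈ 𝒩 and N(ξ) = 2k − 1. -/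
open Filter Topology

/-- The matrix with `A_{i,i−1} = 1` for `2 ≤ i ≤ n`, `A_{1,n} = −1`
(cyclically, the entry in row `i`, column `i − 1` is `δᵢ`) and all other
entries `0`. -/
def Amat (n : ℕ) [NeZero n] : Matrix (Fin n) (Fin n) ℝ :=
  fun i j => if j = i - 1 then cyclicDelta n i else 0

/-!
A nonzero vector of the plane spanned by the samples `i ↦ cos (i α)` and `i ↦ sin (i α)`,
`α = (2k + 1) π / n`, is a sampled cosine `r cos (i α - θ)`, and `A` shifts its phase by `α`
because `n α` is an odd multiple of `π`. Unrolling the cycle with the twist `δ₁ = -1` gives the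
sequence `y₀, …, y_{n-1}, -y₀`, whose sign changes `N` counts. For `y ∈ Λ` close enough to such a
vector, the sign of `y_j` agrees with that of `cos (j α - θ)` wherever the latter is nonzero, so
`y_j` lies in the half-period of the cosine containing `j α - θ` or, at a zero, in an adjacent one.
Since `0 < α < π`, consecutive indices stay in the same half-period or move to the next one, and
the twist forces `2k + 1` moves in total; hence `N y = 2k + 1` near the vector, and `N` is
continuous there.
-/

open Real

theorem neg_one_zpow_mul_self (m : ℤ) : (-1 : ℝ) ^ m * (-1 : ℝ) ^ m = 1 := by
  rw [← mul_zpow]; norm_num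

theorem mul_neg_iff_of_neg_one_zpow_mul_pos {a b : ℝ} {p q : ℤ} (ha : 0 < (-1 : ℝ) ^ p * a)
    (hb : 0 < (-1 : ℝ) ^ q * b) (hpq : q = p ∨ q = p + 1) : a * b < 0 ↔ q = p + 1 := by
  have hp := neg_one_zpow_mul_self p
  rcases hpq with rfl | rfl
  · constructor
    · intro h; nlinarith
    · omega
  · rw [zpow_add_one₀ (by norm_num)] at hb
    simp only [iff_true]
    nlinarith

theorem count_sign_changes_eq_sub {z : ℕ → ℝ} {m : ℕ → ℤ} {n : ℕ}
    (hsign : ∀ j ≤ n, 0 < (-1 : ℝ) ^ m j * z j)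
    (hstep : ∀ j < n, m (j + 1) = m j ∨ m (j + 1) = m j + 1) :
    (Nat.count (fun j => z j * z (j + 1) < 0) n : ℤ) = m n - m 0 := by
  induction n with
  | zero => simp
  | succ n ih =>
    have hchange := mul_neg_iff_of_neg_one_zpow_mul_pos (hsign n (by omega))
      (hsign (n + 1) le_rfl) (hstep n (by omega))
    have hcount := ih (fun j hj => hsign j (by omega)) (fun j hj => hstep j (by omega))
    rw [Nat.count_succ]
    split_ifs <;> grind

theorem exists_neg_one_zpow_mul_pos_of_sin_mul_pos {u z : ℝ} (hz : z ≠ 0)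
    (h : sin (π * u) ≠ 0 → 0 < sin (π * u) * z) :
    ∃ m : ℤ, (m : ℝ) ∈ Set.Icc (u - 1) u ∧ 0 < (-1 : ℝ) ^ m * z := by
  by_cases hfloor : 0 < (-1 : ℝ) ^ ⌊u⌋ * z
  · exact ⟨⌊u⌋, ⟨(Int.sub_one_lt_floor u).le, Int.floor_le u⟩, hfloor⟩
  have hsin : sin (π * u) = (-1 : ℝ) ^ ⌊u⌋ * sin (π * Int.fract u) := by
    rw [← sin_add_int_mul_pi]
    congr 1
    nth_rewrite 1 [← Int.fract_add_floor u]
    ring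
  -- otherwise the sign of `sin (π u)` would be `(-1) ^ ⌊u⌋`, so `u` is an integer
  have hfract : Int.fract u = 0 := by
    by_contra hne
    have hpos : 0 < sin (π * Int.fract u) := sin_pos_of_pos_of_lt_pi
      (mul_pos pi_pos ((Int.fract_nonneg u).lt_of_ne' hne))
      (by nlinarith [Int.fract_lt_one u, pi_pos])
    have := h (by rw [hsin]; exact mul_ne_zero (zpow_ne_zero _ (by norm_num)) hpos.ne')
    rw [hsin, mul_comm ((-1 : ℝ) ^ _), mul_assoc] at this
    exact hfloor (pos_of_mul_pos_right this hpos.le)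
  have hu : u = ⌊u⌋ := by linarith [Int.floor_add_fract u]
  refine ⟨⌊u⌋ - 1, ⟨by push_cast; linarith, by push_cast; linarith⟩, ?_⟩
  have hneg : (-1 : ℝ) ^ ⌊u⌋ * z < 0 :=
    (not_lt.1 hfloor).lt_of_ne (mul_ne_zero (zpow_ne_zero _ (by norm_num)) hz)
  rw [zpow_sub_one₀ (by norm_num), inv_neg_one, mul_neg_one, neg_mul]
  exact neg_pos.2 hneg

theorem eq_or_eq_add_one_of_mem_Icc_sub_one {p q : ℤ} {a b : ℝ}
    (hp : (p : ℝ) ∈ Set.Icc (a - 1) a) (hq : (q : ℝ) ∈ Set.Icc (b - 1) b)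
    (hab : a < b) (hba : b < a + 1) : q = p ∨ q = p + 1 := by
  have h1 : p - 1 < q := by exact_mod_cast (show (p : ℝ) - 1 < q by linarith [hp.2, hq.1])
  have h2 : q < p + 2 := by exact_mod_cast (show (q : ℝ) < p + 2 by linarith [hp.1, hq.2])
  omega

theorem count_sign_changes_of_cos_mul_pos {z : ℕ → ℝ} {α θ : ℝ} {n k : ℕ}
    (hα : n * α = (2 * k + 1) * π) (hα0 : 0 < α) (hαπ : α < π)
    (hz : ∀ j < n, z j ≠ 0) (hzn : z n = -z 0)
    (hcompat : ∀ j < n, cos (j * α - θ) ≠ 0 → 0 < cos (j * α - θ) * z j) :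
    Nat.count (fun j => z j * z (j + 1) < 0) n = 2 * k + 1 := by
  have hn : 0 < n := Nat.pos_of_ne_zero <| by
    rintro rfl; rw [Nat.cast_zero, zero_mul] at hα; nlinarith [pi_pos]
  set u : ℕ → ℝ := fun j => (j * α - θ) / π + 1 / 2 with hu
  have hsin : ∀ j, sin (π * u j) = cos (j * α - θ) := fun j => by
    rw [← sin_add_pi_div_two]; congr 1; simp only [hu]; field_simp
  have hustep : ∀ j, u (j + 1) = u j + α / π := fun j => by
    simp only [hu]; push_cast; ring
  have hun : u n = u 0 + (2 * k + 1) := by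
    have : (n * α) / π = 2 * k + 1 := by rw [hα]; field_simp
    simp only [hu, Nat.cast_zero, zero_mul, zero_sub]
    linear_combination this
  have hband : ∀ j, ∃ m : ℤ,
      j < n → (m : ℝ) ∈ Set.Icc (u j - 1) (u j) ∧ 0 < (-1 : ℝ) ^ m * z j := by
    intro j
    by_cases hj : j < n
    · obtain ⟨m, hm⟩ :=
        exists_neg_one_zpow_mul_pos_of_sin_mul_pos (hz j hj) (hsin j ▸ hcompat j hj)
      exact ⟨m, fun _ => hm⟩
    · exact ⟨0, fun h => absurd h hj⟩
  choose m hm using hband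
  -- at `n` the band index is shifted from the one at `0` rather than chosen
  set M : ℕ → ℤ := fun j => if j < n then m j else m 0 + (2 * k + 1) with hM
  have hMband : ∀ j ≤ n, (M j : ℝ) ∈ Set.Icc (u j - 1) (u j) ∧ 0 < (-1 : ℝ) ^ M j * z j := by
    intro j hj
    rcases hj.lt_or_eq with hj | rfl
    · simpa [hM, hj] using hm j hj
    · obtain ⟨⟨h1, h2⟩, h3⟩ := hm 0 hn
      simp only [hM, lt_irrefl, if_false, hun, hzn]
      refine ⟨⟨by push_cast; linarith, by push_cast; linarith⟩, ?_⟩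
      rw [zpow_add₀ (by norm_num), show (2 * (k : ℤ) + 1) = (2 * k + 1 : ℕ) by push_cast; ring,
        zpow_natCast, Odd.neg_one_pow (by simp)]
      linarith
  have hcount := count_sign_changes_eq_sub (fun j hj => (hMband j hj).2) fun j hj =>
    eq_or_eq_add_one_of_mem_Icc_sub_one (hMband j hj.le).1 (hMband (j + 1) hj).1
      (by rw [hustep]; linarith [div_pos hα0 pi_pos])
      (by rw [hustep]; linarith [(div_lt_one pi_pos).2 hαπ])
  simp only [hM, lt_irrefl, if_false, hn, if_true] at hcount
  omega

open Count in
theorem Nat.count_eq_card_fin_subtype (p : ℕ → Prop) [DecidablePred p] (n : ℕ) :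
    Nat.count p n = Nat.card {j : Fin n // p j} := by
  rw [Nat.count_eq_card_fintype, ← Nat.card_eq_fintype_card]
  exact Nat.card_congr (Fin.equivSubtype.subtypeEquiv (fun _ => Iff.rfl) |>.trans
    (Equiv.subtypeSubtypeEquivSubtypeInter _ _)).symm

def cyclicUnroll (n : ℕ) [NeZero n] (y : Fin n → ℝ) (j : ℕ) : ℝ :=
  if h : j < n then y ⟨j, h⟩ else -y 0

theorem cyclicDelta_mul_eq_cyclicUnroll_mul (n : ℕ) [NeZero n] (y : Fin n → ℝ) (j : Fin n) :
    cyclicDelta n (j + 1) * y (j + 1) * y (j + 1 - 1) =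
      cyclicUnroll n y j * cyclicUnroll n y (j + 1) := by
  rw [add_sub_cancel_right]
  by_cases h : (j : ℕ) + 1 < n
  · have hval : ((j + 1 : Fin n) : ℕ) = j + 1 := Fin.val_add_one_of_lt' h
    have hne : j + 1 ≠ 0 := fun h0 => by simp [h0] at hval
    simp [cyclicUnroll, cyclicDelta, hne, ← hval, mul_comm]
  · have hlast : j + 1 = 0 := by
      have hj : (j : ℕ) + 1 = n := by omega
      rw [Fin.ext_iff, Fin.val_add, Fin.val_one', Nat.add_mod_mod, hj, Nat.mod_self, Fin.val_zero]
    simp [cyclicUnroll, cyclicDelta, hlast, h, mul_comm]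

theorem cyclicN_eq_count (n : ℕ) [NeZero n] (y : Fin n → ℝ) :
    cyclicN n y = Nat.count (fun j => cyclicUnroll n y j * cyclicUnroll n y (j + 1) < 0) n := by
  rw [cyclicN, Nat.count_eq_card_fin_subtype]
  exact (Nat.card_congr ((Equiv.addRight 1).subtypeEquiv fun j => by
    rw [Equiv.coe_addRight, cyclicDelta_mul_eq_cyclicUnroll_mul])).symm

theorem dense_cyclicLambda (n : ℕ) [NeZero n] : Dense (cyclicLambda n) := by
  simpa [cyclicLambda, Set.pi, Set.compl_def] using
    dense_pi Set.univ fun (_ : Fin n) _ => dense_compl_singleton (0 : ℝ)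

theorem cyclicNm_eq_and_cyclicNM_eq_of_eventually {n : ℕ} [NeZero n] {x : Fin n → ℝ} {c : ℕ}
    (h : ∀ᶠ y in 𝓝[cyclicLambda n] x, cyclicN n y = c) :
    cyclicNm n x = c ∧ cyclicNM n x = c := by
  have := mem_closure_iff_nhdsWithin_neBot.1 ((dense_cyclicLambda n).closure_eq ▸ Set.mem_univ x)
  have hset : {k | ∃ᶠ y in 𝓝[cyclicLambda n] x, cyclicN n y = k} = {c} := by
    ext k
    refine ⟨fun hk => ?_, fun hk => hk ▸ h.frequently⟩
    obtain ⟨y, hyk, hyc⟩ := (hk.and_eventually h).exists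
    exact hyk.symm.trans hyc
  exact ⟨by rw [cyclicNm, hset, csInf_singleton], by rw [cyclicNM, hset, csSup_singleton]⟩

theorem eventually_forall_pos_mul_of_ne_zero {ι : Type*} [Finite ι] (ξ : ι → ℝ) :
    ∀ᶠ y in 𝓝 ξ, ∀ i, ξ i ≠ 0 → 0 < ξ i * y i := by
  refine eventually_all.2 fun i => ?_
  by_cases hi : ξ i = 0
  · exact Eventually.of_forall fun _ h => absurd hi h
  · have hcont : Continuous fun y : ι → ℝ => ξ i * y i :=
      continuous_const.mul (continuous_apply i)
    exact (hcont.continuousAt.eventually (lt_mem_nhds (mul_self_pos.2 hi))).mono fun _ hy _ => hy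

noncomputable def phaseVec (n : ℕ) (α θ : ℝ) : Fin n → ℝ := fun i => cos (i * α - θ)

def phasePlane (n : ℕ) (α : ℝ) : Submodule ℝ (Fin n → ℝ) :=
  Submodule.span ℝ {phaseVec n α 0, phaseVec n α (π / 2)}

theorem phaseVec_eq_cos_smul_add_sin_smul (n : ℕ) (α θ : ℝ) :
    phaseVec n α θ = cos θ • phaseVec n α 0 + sin θ • phaseVec n α (π / 2) := by
  ext i
  simp only [phaseVec, cos_sub, Pi.add_apply, Pi.smul_apply, smul_eq_mul, sub_zero, cos_pi_div_two,
    sin_pi_div_two, mul_zero, mul_one, zero_add]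
  ring

theorem phaseVec_mem_phasePlane (n : ℕ) (α θ : ℝ) : phaseVec n α θ ∈ phasePlane n α := by
  rw [phaseVec_eq_cos_smul_add_sin_smul]
  exact add_mem (Submodule.smul_mem _ _ (Submodule.subset_span (by simp)))
    (Submodule.smul_mem _ _ (Submodule.subset_span (by simp)))

theorem exists_pos_smul_phaseVec_of_mem_phasePlane {n : ℕ} {α : ℝ} {ξ : Fin n → ℝ}
    (hξ : ξ ∈ phasePlane n α) (h0 : ξ ≠ 0) :
    ∃ r : ℝ, 0 < r ∧ ∃ θ, ξ = r • phaseVec n α θ := by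
  obtain ⟨a, b, rfl⟩ := Submodule.mem_span_pair.1 hξ
  set z : ℂ := ⟨a, b⟩
  have hz : z ≠ 0 := fun hz => h0 (by simp [show a = 0 from congrArg Complex.re hz,
    show b = 0 from congrArg Complex.im hz])
  refine ⟨‖z‖, norm_pos_iff.2 hz, Complex.arg z, ?_⟩
  rw [phaseVec_eq_cos_smul_add_sin_smul n α z.arg, smul_add, smul_smul, smul_smul,
    Complex.norm_mul_cos_arg, Complex.norm_mul_sin_arg]

theorem finrank_phasePlane {n : ℕ} (hn : 1 < n) {α : ℝ} (hα : sin α ≠ 0) :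
    Module.finrank ℝ (phasePlane n α) = 2 := by
  have hli : LinearIndependent ℝ ![phaseVec n α 0, phaseVec n α (π / 2)] := by
    refine LinearIndependent.pair_iff.2 fun s t hst => ?_
    have h0 : s = 0 := by simpa [phaseVec] using congrFun hst ⟨0, by omega⟩
    have h1 : t * sin α = 0 := by
      simpa [phaseVec, h0, cos_sub_pi_div_two] using congrFun hst ⟨1, hn⟩
    exact ⟨h0, (mul_eq_zero.1 h1).resolve_right hα⟩
  rw [phasePlane, ← Matrix.range_cons_cons_empty _ _ ![], finrank_span_eq_card hli,
    Fintype.card_fin]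

noncomputable def cyclicFreq (n k : ℕ) : ℝ := (2 * k + 1) * π / n

theorem natCast_mul_cyclicFreq (n k : ℕ) [NeZero n] : n * cyclicFreq n k = (2 * k + 1) * π := by
  have : (n : ℝ) ≠ 0 := Nat.cast_ne_zero.2 (NeZero.ne n)
  rw [cyclicFreq]
  field_simp

theorem cyclicFreq_pos (n k : ℕ) [NeZero n] : 0 < cyclicFreq n k := by
  have : (0 : ℝ) < n := Nat.cast_pos.2 (Nat.pos_of_ne_zero (NeZero.ne n))
  rw [cyclicFreq]
  positivity

theorem cyclicFreq_lt_pi {n k : ℕ} (hk : 2 * k + 1 < n) : cyclicFreq n k < π := by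
  have hkR : 2 * (k : ℝ) + 1 < n := by exact_mod_cast hk
  rw [cyclicFreq, div_lt_iff₀ (by linarith)]
  nlinarith [pi_pos]

theorem Amat_mulVec_apply (n : ℕ) [NeZero n] (x : Fin n → ℝ) (i : Fin n) :
    (Amat n).mulVec x i = cyclicDelta n i * x (i - 1) := by
  simp [Amat, Matrix.mulVec, dotProduct, ite_mul]

theorem Amat_mulVec_phaseVec (n k : ℕ) [NeZero n] (θ : ℝ) :
    (Amat n).mulVec (phaseVec n (cyclicFreq n k) θ) =
      phaseVec n (cyclicFreq n k) (θ + cyclicFreq n k) := by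
  have hα := natCast_mul_cyclicFreq n k
  set α := cyclicFreq n k
  ext i
  rw [Amat_mulVec_apply]
  obtain ⟨m, rfl⟩ := Nat.exists_eq_succ_of_ne_zero (NeZero.ne n)
  by_cases hi : i = 0
  · have hwrap : (m : ℝ) * α - θ = (2 * k + 1 : ℕ) * π - (θ + α) := by
      push_cast at hα ⊢; linear_combination hα
    have hcos : cos ((m : ℝ) * α - θ) = -cos (θ + α) := by
      rw [hwrap, cos_nat_mul_pi_sub, Odd.neg_one_pow (by simp), neg_one_mul]
    simp [phaseVec, cyclicDelta, hi, hcos, ← cos_neg (θ + α)]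
  · have hval : ((i - 1 : ℕ) : ℝ) = i - 1 := by
      rw [Nat.cast_sub (Nat.one_le_iff_ne_zero.2 (Fin.val_ne_zero_iff.2 hi))]; simp
    simp only [phaseVec, cyclicDelta, hi, if_false, one_mul, Fin.coe_sub_one, hval]
    ring_nf

theorem Amat_mulVec_mem_phasePlane {n k : ℕ} [NeZero n] {x : Fin n → ℝ}
    (hx : x ∈ phasePlane n (cyclicFreq n k)) :
    (Amat n).mulVec x ∈ phasePlane n (cyclicFreq n k) := by
  suffices h : phasePlane n (cyclicFreq n k) ≤
      (phasePlane n (cyclicFreq n k)).comap (Matrix.toLin' (Amat n)) from h hx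
  refine Submodule.span_le.2 ?_
  rintro _ (rfl | rfl) <;>
  · simp only [SetLike.mem_coe, Submodule.mem_comap, Matrix.toLin'_apply, Amat_mulVec_phaseVec,
      phaseVec_mem_phasePlane]

theorem cyclicN_eq_of_phaseVec_mul_pos {n k : ℕ} [NeZero n] (hk : 2 * k + 1 < n) {θ : ℝ}
    {y : Fin n → ℝ} (hy : y ∈ cyclicLambda n)
    (hsign : ∀ i, phaseVec n (cyclicFreq n k) θ i ≠ 0 →
      0 < phaseVec n (cyclicFreq n k) θ i * y i) :
    cyclicN n y = 2 * k + 1 := by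
  have hn : 0 < n := Nat.pos_of_ne_zero (NeZero.ne n)
  rw [cyclicN_eq_count]
  refine count_sign_changes_of_cos_mul_pos (θ := θ) (natCast_mul_cyclicFreq n k)
    (cyclicFreq_pos n k) (cyclicFreq_lt_pi hk) (fun j hj => ?_) ?_ fun j hj => ?_
  · simpa [cyclicUnroll, hj] using hy ⟨j, hj⟩
  · simp [cyclicUnroll, hn]
  · simpa [cyclicUnroll, hj, phaseVec] using hsign ⟨j, hj⟩

theorem cyclicNm_eq_and_cyclicNM_eq_smul_phaseVec {n k : ℕ} [NeZero n] (hk : 2 * k + 1 < n)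
    (θ : ℝ) {r : ℝ} (hr : 0 < r) :
    cyclicNm n (r • phaseVec n (cyclicFreq n k) θ) = 2 * k + 1 ∧
      cyclicNM n (r • phaseVec n (cyclicFreq n k) θ) = 2 * k + 1 := by
  refine cyclicNm_eq_and_cyclicNM_eq_of_eventually ?_
  filter_upwards [nhdsWithin_le_nhds (eventually_forall_pos_mul_of_ne_zero _),
    self_mem_nhdsWithin] with y hsign hy
  refine cyclicN_eq_of_phaseVec_mul_pos (θ := θ) hk hy fun i hi => ?_
  have := hsign i (by simp [hr.ne', hi])
  simp only [Pi.smul_apply, smul_eq_mul, mul_assoc] at this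
  exact pos_of_mul_pos_right this hr.le

/-- Here `k : Fin (n / 2)` is the paper's index `k + 1`, so the paper's `2k − 1` reads
`2 k + 1`. -/
theorem stmt9_general (n : ℕ) [NeZero n] :
    ∃ E : Fin (n / 2) → Submodule ℝ (Fin n → ℝ),
      (∀ k, Module.finrank ℝ (E k) = 2) ∧
      (∀ k, ∀ x ∈ E k, (Amat n).mulVec x ∈ E k) ∧
      (∀ k, ∀ ξ ∈ E k, ξ ≠ 0 →
        ξ ∈ cyclicGood n ∧ cyclicNm n ξ = 2 * (k : ℕ) + 1) := by
  have hk : ∀ k : Fin (n / 2), 2 * (k : ℕ) + 1 < n := fun k => by have := k.isLt; omega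
  refine ⟨fun k => phasePlane n (cyclicFreq n k), fun k => ?_, fun k x hx =>
    Amat_mulVec_mem_phasePlane hx, fun k ξ hξ h0 => ?_⟩
  · exact finrank_phasePlane (by linarith [hk k])
      (sin_pos_of_pos_of_lt_pi (cyclicFreq_pos n k) (cyclicFreq_lt_pi (hk k))).ne'
  · obtain ⟨r, hr, θ, rfl⟩ := exists_pos_smul_phaseVec_of_mem_phasePlane hξ h0
    obtain ⟨hm, hM⟩ := cyclicNm_eq_and_cyclicNM_eq_smul_phaseVec (hk k) θ hr
    exact ⟨hm.trans hM.symm, hm⟩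

/-- For `n` even, there are `n/2` two-dimensional
`A`-invariant subspaces `E₁, …, E_{n/2}` such that every nonzero `ξ ∈ E_k`
lies in `𝒩` with `N(ξ) = 2k − 1` (here `k : Fin (n/2)` corresponds to the
paper's index `k.val + 1`, so `2k − 1` becomes `2 k.val + 1`). -/
theorem stmt9 (n : ℕ) [NeZero n] (hn : 2 ≤ n) (heven : n % 2 = 0) :
    ∃ E : Fin (n / 2) → Submodule ℝ (Fin n → ℝ),
      (∀ k, Module.finrank ℝ (E k) = 2) ∧
      (∀ k, ∀ x ∈ E k, (Amat n).mulVec x ∈ E k) ∧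
      (∀ k, ∀ ξ ∈ E k, ξ ≠ 0 →
        ξ ∈ cyclicGood n ∧ cyclicNm n ξ = 2 * (k : ℕ) + 1) :=
  stmt9_general n
end

section
/- Let x(t) be the solution of the linear cyclic negative feedback system whose initial value x(0) satisfies x₁(0) ≠ 0 and xᵢ(0) = 0 for i = 2, …, n. Then for each 2 ≤ i ≤ n, as t → 0, xᵢ(t) = (∏_{j=2}^{i} a_{j,j−1}(0)) · x₁(0) · t^{i−1}/(i−1)! + o(t^{i−1}). -/
open Filter Topology

/-! Induction along the chain `x₁ → x₂ → ⋯`: the coordinate `xᵢ` solves the scalar equation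
`ẋᵢ = aᵢᵢ xᵢ + a_{i,i−1} x_{i−1}` with `xᵢ(0) = 0`. If `x_{i−1} = L t^m + o(t^m)`, repeated
l'Hôpital first gives `xᵢ = o(t^l)` for every `l ≤ m`, and then
`xᵢ = a_{i,i−1}(0) L t^{m+1}/(m+1) + o(t^{m+1})`. -/

theorem tendsto_div_pow_succ_of_hasDerivAt {f f' : ℝ → ℝ} {l : ℕ} {L : ℝ}
    (hf : ∀ t, HasDerivAt f (f' t) t) (hf0 : f 0 = 0)
    (h : Tendsto (fun t => f' t / t ^ l) (𝓝[≠] 0) (𝓝 L)) :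
    Tendsto (fun t => f t / t ^ (l + 1)) (𝓝[≠] 0) (𝓝 (L / (l + 1))) := by
  have hf_lim : Tendsto f (𝓝[≠] 0) (𝓝 0) := by
    simpa [hf0] using (hf 0).continuousAt.tendsto.mono_left nhdsWithin_le_nhds
  have hpow_lim : Tendsto (fun t : ℝ => t ^ (l + 1)) (𝓝[≠] 0) (𝓝 0) := by
    simpa using ((continuous_pow (l + 1)).tendsto (0 : ℝ)).mono_left nhdsWithin_le_nhds
  refine HasDerivAt.lhopital_zero_nhdsNE (f' := f') (g' := fun t => (l + 1 : ℝ) * t ^ l)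
    (Eventually.of_forall hf) (Eventually.of_forall fun t => by simpa using hasDerivAt_pow (l + 1) t)
    ?_ hf_lim hpow_lim ?_
  · filter_upwards [self_mem_nhdsWithin] with t ht
    exact mul_ne_zero (by positivity) (pow_ne_zero _ ht)
  · simpa only [mul_comm, div_mul_eq_div_div] using h.div_const (l + 1 : ℝ)

theorem tendsto_div_pow_of_lt {g : ℝ → ℝ} {l m : ℕ} {L : ℝ} (hlm : l < m)
    (hg : Tendsto (fun t => g t / t ^ m) (𝓝[≠] 0) (𝓝 L)) :
    Tendsto (fun t => g t / t ^ l) (𝓝[≠] 0) (𝓝 0) := by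
  have hpow : Tendsto (fun t : ℝ => t ^ (m - l)) (𝓝[≠] 0) (𝓝 0) := by
    simpa [Nat.sub_ne_zero_of_lt hlm] using
      ((continuous_pow (m - l)).tendsto (0 : ℝ)).mono_left nhdsWithin_le_nhds
  refine (mul_zero L ▸ hg.mul hpow).congr' ?_
  filter_upwards [self_mem_nhdsWithin] with t (ht : t ≠ 0)
  rw [div_mul_eq_mul_div, div_eq_div_iff (pow_ne_zero _ ht) (pow_ne_zero _ ht), mul_assoc,
    ← pow_add, Nat.sub_add_cancel hlm.le]

theorem tendsto_div_pow_succ_of_hasDerivAt_linear {f g a b : ℝ → ℝ} {m : ℕ} {L : ℝ}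
    (hf : ∀ t, HasDerivAt f (a t * f t + b t * g t) t) (hf0 : f 0 = 0)
    (ha : ContinuousAt a 0) (hb : ContinuousAt b 0)
    (hg : Tendsto (fun t => g t / t ^ m) (𝓝[≠] 0) (𝓝 L)) :
    Tendsto (fun t => f t / t ^ (m + 1)) (𝓝[≠] 0) (𝓝 (b 0 * L / (m + 1))) := by
  have hderiv {l : ℕ} {A B : ℝ} (hfA : Tendsto (fun t => f t / t ^ l) (𝓝[≠] 0) (𝓝 A))
      (hgB : Tendsto (fun t => g t / t ^ l) (𝓝[≠] 0) (𝓝 B)) :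
      Tendsto (fun t => (a t * f t + b t * g t) / t ^ l) (𝓝[≠] 0) (𝓝 (a 0 * A + b 0 * B)) := by
    simpa only [add_div, mul_div_assoc] using
      ((ha.tendsto.mono_left nhdsWithin_le_nhds).mul hfA).add
        ((hb.tendsto.mono_left nhdsWithin_le_nhds).mul hgB)
  have hsmall : ∀ l ≤ m, Tendsto (fun t => f t / t ^ l) (𝓝[≠] 0) (𝓝 0) := by
    intro l hl
    induction l with
    | zero => simpa [hf0] using (hf 0).continuousAt.tendsto.mono_left nhdsWithin_le_nhds
    | succ l ih =>
      simpa using tendsto_div_pow_succ_of_hasDerivAt hf hf0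
        (hderiv (ih (by omega)) (tendsto_div_pow_of_lt (by omega) hg))
  simpa using tendsto_div_pow_succ_of_hasDerivAt hf hf0 (hderiv (hsmall m le_rfl) hg)

open Fin.NatCast in
theorem LinCNF.tendsto_div_pow_val {n : ℕ} [NeZero n] (S : LinCNF n) {x : ℝ → Fin n → ℝ}
    (hsol : S.IsSolution x) (h0 : ∀ i : Fin n, i ≠ 0 → x 0 i = 0) (i : Fin n) :
    Tendsto (fun t => x t i / t ^ i.val) (𝓝[≠] 0)
      (𝓝 ((∏ k ∈ Finset.Icc 1 i.val, S.sub 0 (k : Fin n)) * x 0 0 / i.val.factorial)) := by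
  induction hm : i.val generalizing i with
  | zero =>
    obtain rfl : i = 0 := Fin.ext hm
    simpa using (hsol 0 0).continuousAt.tendsto.mono_left nhdsWithin_le_nhds
  | succ m ih =>
    have hi : i ≠ 0 := by rintro rfl; simp at hm
    have hprev : (i - 1).val = m := by rw [Fin.val_sub_one_of_ne_zero hi]; omega
    have hcast : ((m + 1 : ℕ) : Fin n) = i := by rw [← hm, Fin.cast_val_eq_self]
    convert tendsto_div_pow_succ_of_hasDerivAt_linear (fun t => hsol t i) (h0 i hi)
      (S.cont_diag i).continuousAt (S.cont_sub i).continuousAt (ih (i - 1) hprev) using 2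
    rw [Finset.prod_Icc_succ_top (by omega), hcast, Nat.factorial_succ]
    push_cast
    field_simp

theorem stmt17_general (n : ℕ) [NeZero n] (S : LinCNF n) (x : ℝ → Fin n → ℝ)
    (hsol : S.IsSolution x)
    (h0 : ∀ i : Fin n, i ≠ 0 → x 0 i = 0) :
    ∀ i : Fin n, i ≠ 0 →
      Tendsto (fun t : ℝ =>
          (x t i -
            (∏ k ∈ Finset.Icc 1 i.val, S.sub 0 (@Nat.cast (Fin n) (Fin.NatCast.instNatCast n) k)) * x 0 (0 : Fin n) *
              t ^ i.val / (Nat.factorial i.val)) / t ^ i.val)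
        (𝓝[≠] (0 : ℝ)) (𝓝 0) := by
  intro i _
  have hlim := (S.tendsto_div_pow_val hsol h0 i).sub_const
    ((∏ k ∈ Finset.Icc 1 i.val, S.sub 0 (@Nat.cast (Fin n) (Fin.NatCast.instNatCast n) k)) *
      x 0 0 / i.val.factorial)
  rw [sub_self] at hlim
  refine hlim.congr' ?_
  filter_upwards [self_mem_nhdsWithin] with t (ht : t ≠ 0)
  field_simp

/-- For the solution starting at `x(0) = (x₁(0), 0, …, 0)` with
`x₁(0) ≠ 0`, each component satisfies
`xᵢ(t) = (∏_{j=2}^{i} a_{j,j−1}(0)) x₁(0) t^{i−1}/(i−1)! + o(t^{i−1})` as `t → 0`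
(in our 0-based indexing, index `i : Fin n` corresponds to the paper's `i+1`,
so the exponent is `i.val` and the product runs over `a_{k+1,k}(0)` for
`k = 1, …, i.val`). -/
theorem stmt17 (n : ℕ) [NeZero n] (hn : 2 ≤ n) (S : LinCNF n) (x : ℝ → Fin n → ℝ)
    (hsol : S.IsSolution x)
    (h1 : x 0 (0 : Fin n) ≠ 0) (h0 : ∀ i : Fin n, i ≠ 0 → x 0 i = 0) :
    ∀ i : Fin n, i ≠ 0 →
      Tendsto (fun t : ℝ =>
          (x t i -
            (∏ k ∈ Finset.Icc 1 i.val, S.sub 0 (@Nat.cast (Fin n) (Fin.NatCast.instNatCast n) k)) * x 0 (0 : Fin n) *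
              t ^ i.val / (Nat.factorial i.val)) / t ^ i.val)
        (𝓝[≠] (0 : ℝ)) (𝓝 0) :=
  stmt17_general n S x hsol h0
end

section
/- Let x(t) be a nontrivial solution of the linear cyclic negative feedback system that is periodic, i.e., x(t + ω) = x(t) for all t ∈ ℝ for some ω > 0. Then x(t) ∈ 𝒩 for all t ∈ ℝ, and N(x(t)) is independent of t. -/
open Filter Topology

/-!
Fix a time `t₀`; since `x` is nontrivial, uniqueness for linear equations gives `x t₀ ≠ 0`.
Going around the cycle from a nonzero coordinate, the integrating factor for
`ẋⱼ = aⱼⱼ xⱼ + aⱼ,ⱼ₋₁ xⱼ₋₁` shows that a coordinate vanishing at `t₀` takes, just after `t₀`,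
the sign making its term of `N` good (`δⱼ xⱼ xⱼ₋₁ > 0`), and just before `t₀` the sign making it
bad. Flipping mismatched signs one at a time shows that such a forward (backward) sign pattern
minimises (maximises) `N` among the points of `Λ` near `x t₀`. Hence `t ↦ N_m(x t)` equals
`N_m(x t₀)` just after `t₀` and `N_M(x t₀) ≥ N_m(x t₀)` just before: it is lower semicontinuous
and right-locally non-increasing, hence antitone, hence constant by periodicity. Its value just
before `t₀` then gives `N_m(x t₀) = N_M(x t₀)`.
-/

open Finset Function

open Fin.NatCast in
theorem Fin.cyclic_induction {n : ℕ} [NeZero n] {P : Fin n → Prop} (i₀ : Fin n) (h₀ : P i₀)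
    (hstep : ∀ j, P j → P (j + 1)) (i : Fin n) : P i := by
  have hP : ∀ k : ℕ, P (i₀ + k) := by
    intro k
    induction k with
    | zero => simpa using h₀
    | succ k ih => simpa [add_assoc] using hstep _ ih
  simpa using hP (i - i₀).val

theorem Finset.exists_mem_sub_one_notMem {n : ℕ} [NeZero n] {M : Finset (Fin n)}
    (hM : M.Nonempty) {i₀ : Fin n} (hi₀ : i₀ ∉ M) : ∃ j ∈ M, j - 1 ∉ M := by
  by_contra! hclosed
  obtain ⟨j, hj⟩ := hM
  refine Fin.cyclic_induction (P := (· ∉ M)) i₀ hi₀ (fun k hk hk1 => hk ?_) j hj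
  simpa using hclosed _ hk1

section OrderedRing

variable {α : Type*} [CommRing α] [LinearOrder α] [IsStrictOrderedRing α]

lemma mul_neg_iff_of_mul_pos {p q : α} (h : 0 < p * q) (a : α) : a * p < 0 ↔ a * q < 0 := by
  rw [mul_neg_iff, mul_neg_iff]
  rcases mul_pos_iff.1 h with ⟨hp, hq⟩ | ⟨hp, hq⟩ <;> simp [hp, hq, hp.not_gt, hq.not_gt]

lemma mul_pos_of_mul_pos_of_mul_pos {a b c : α} (hab : 0 < a * b) (hac : 0 < a * c) :
    0 < b * c := by
  nlinarith [mul_pos hab hac, sq_nonneg a]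

lemma mul_mul_pos_of_mul_pos_of_mul_pos {d s a b : α} (h1 : 0 < d * s * a) (h2 : 0 < s * b) :
    0 < d * a * b := by
  have h := mul_pos h1 h2
  rw [show d * s * a * (s * b) = d * a * b * s ^ 2 by ring] at h
  exact pos_of_mul_pos_left h (sq_nonneg s)

lemma mul_mul_neg_of_mul_neg_of_mul_pos {d a a' b b' : α} (h1 : 0 < d * a * a') (h2 : a * b < 0)
    (h3 : 0 < a' * b') : d * b * b' < 0 := by
  have h := mul_neg_of_neg_of_pos (mul_neg_of_pos_of_neg h1 h2) h3
  have : d * a * a' * (a * b) * (a' * b') = d * b * b' * (a * a') ^ 2 := by ring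
  nlinarith [sq_nonneg (a * a')]

end OrderedRing

section SignChangeCount

variable {n : ℕ} [NeZero n]

noncomputable def signChangeCount (δ y : Fin n → ℝ) : ℕ :=
  #{i | δ i * y i * y (i - 1) < 0}

lemma signChangeCount_le (δ y : Fin n → ℝ) : signChangeCount δ y ≤ n :=
  (card_filter_le _ _).trans (by simp)

lemma signChangeCount_congr (δ : Fin n → ℝ) {y w : Fin n → ℝ} (h : ∀ i, 0 < y i * w i) :
    signChangeCount δ y = signChangeCount δ w := by
  unfold signChangeCount
  congr 1
  refine filter_congr fun i _ => ?_
  simp only [mul_assoc]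
  exact mul_neg_iff_of_mul_pos (by nlinarith [mul_pos (h i) (h (i - 1))]) _

lemma signChangeCount_neg {δ y : Fin n → ℝ} (hδ : ∀ i, δ i ≠ 0) (hy : ∀ i, y i ≠ 0) :
    signChangeCount (-δ) y = n - signChangeCount δ y := by
  have hflip : ∀ i, -δ i * y i * y (i - 1) < 0 ↔ ¬ δ i * y i * y (i - 1) < 0 := fun i => by
    have : δ i * y i * y (i - 1) ≠ 0 := mul_ne_zero (mul_ne_zero (hδ i) (hy i)) (hy _)
    rw [neg_mul, neg_mul, neg_lt_zero, not_lt, this.symm.le_iff_lt]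
  have := card_filter_add_card_filter_not (s := univ)
    (fun i : Fin n => δ i * y i * y (i - 1) < 0)
  simp only [signChangeCount, Pi.neg_apply, hflip, card_univ, Fintype.card_fin] at this ⊢
  omega

lemma signChangeCount_update_neg_le {δ y : Fin n → ℝ} {j : Fin n}
    (hj : δ j * y j * y (j - 1) < 0) (hj1 : j - 1 ≠ j) :
    signChangeCount δ (update y j (-y j)) ≤ signChangeCount δ y := by
  set bad := ({i | δ i * y i * y (i - 1) < 0} : Finset (Fin n))
  have hjbad : j ∈ bad := by simpa [bad] using hj
  have hsub : ({i | δ i * update y j (-y j) i * update y j (-y j) (i - 1) < 0} : Finset _) ⊆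
      insert (j + 1) (bad.erase j) := by
    intro i hi
    simp only [mem_filter] at hi
    rcases eq_or_ne i (j + 1) with rfl | hij1
    · exact mem_insert_self _ _
    have hi1 : i - 1 ≠ j := fun h => hij1 (by rw [← h, sub_add_cancel])
    rcases eq_or_ne i j with rfl | hij
    · rw [update_self, update_of_ne hj1] at hi
      linarith
    · rw [update_of_ne hij, update_of_ne hi1] at hi
      simp [bad, hij, hi]
  calc _ ≤ #(insert (j + 1) (bad.erase j)) := card_le_card hsub
    _ ≤ #(bad.erase j) + 1 := card_insert_le _ _
    _ = #bad := card_erase_add_one hjbad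

theorem signChangeCount_le_of_forward {δ z σ y : Fin n → ℝ} (hz : z ≠ 0)
    (hσ : ∀ i, σ i ≠ 0) (hσz : ∀ i, z i ≠ 0 → 0 < z i * σ i)
    (hfwd : ∀ i, z i = 0 → 0 < δ i * σ i * σ (i - 1))
    (hy : ∀ i, y i ≠ 0) (hyz : ∀ i, z i ≠ 0 → 0 < z i * y i) :
    signChangeCount δ σ ≤ signChangeCount δ y := by
  obtain ⟨i₀, hi₀⟩ := Function.ne_iff.1 hz
  induction hk : #({i | σ i * y i < 0} : Finset (Fin n)) generalizing y with
  | zero =>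
    refine (signChangeCount_congr δ fun i => ?_).le
    rcases (mul_ne_zero (hσ i) (hy i)).lt_or_gt with h | h
    · have : i ∉ ({i | σ i * y i < 0} : Finset (Fin n)) := by simp [card_eq_zero.1 hk]
      exact absurd h (by simpa using this)
    · exact h
  | succ k ih =>
    set M := ({i | σ i * y i < 0} : Finset (Fin n))
    have hMz : ∀ i ∈ M, z i = 0 := fun i hi => by
      by_contra h
      simp only [M, mem_filter] at hi
      exact hi.2.not_gt (mul_pos_of_mul_pos_of_mul_pos (hσz i h) (hyz i h))
    -- Flip a mismatched `y j` whose predecessor matches `σ`: its term in the count was bad, so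
    -- the flip lowers the mismatches without raising the count.
    obtain ⟨j, hjM, hj1M⟩ := exists_mem_sub_one_notMem (card_pos.1 (by omega))
      (fun h => hi₀ (hMz i₀ h))
    have hzj := hMz j hjM
    simp only [M, mem_filter, Finset.mem_univ, true_and, not_lt] at hjM hj1M
    have hj1 : j - 1 ≠ j := fun h => by rw [h] at hj1M; exact hj1M.not_gt hjM
    have hflip : ({i | σ i * update y j (-y j) i < 0} : Finset (Fin n)) = M.erase j := by
      ext i
      rcases eq_or_ne i j with rfl | hij
      · simp [M, hjM.le]
      · simp [M, hij]
    calc signChangeCount δ σ ≤ signChangeCount δ (update y j (-y j)) := by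
          refine ih (fun i => ?_) (fun i hi => ?_) ?_
          · rcases eq_or_ne i j with rfl | hij
            · simpa using hy i
            · simpa [update_of_ne hij] using hy i
          · rw [update_of_ne (by rintro rfl; exact hi hzj)]
            exact hyz i hi
          · rw [hflip, card_erase_of_mem (by simpa [M] using hjM), hk, Nat.add_sub_cancel]
      _ ≤ signChangeCount δ y := by
          refine signChangeCount_update_neg_le
            (mul_mul_neg_of_mul_neg_of_mul_pos (hfwd j hzj) hjM ?_) hj1
          exact hj1M.lt_of_ne (mul_ne_zero (hσ _) (hy _)).symm

end SignChangeCount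

lemma eventually_mul_pos_of_ne_zero {ι : Type*} [Finite ι] (z : ι → ℝ) :
    ∀ᶠ y in 𝓝 z, ∀ i, z i ≠ 0 → 0 < z i * y i := by
  refine eventually_all.2 fun i => ?_
  by_cases hi : z i = 0
  · exact Eventually.of_forall fun _ h => absurd hi h
  · have hcont : Continuous fun y : ι → ℝ => z i * y i := by fun_prop
    exact (hcont.tendsto z).eventually (eventually_gt_nhds (mul_self_pos.2 hi)) |>.mono
      fun _ h _ => h

section CyclicN

variable {n : ℕ} [NeZero n]

lemma cyclicN_eq_signChangeCount (y : Fin n → ℝ) :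
    cyclicN n y = signChangeCount (cyclicDelta n) y := by
  rw [cyclicN, Nat.card_eq_fintype_card, Fintype.card_subtype, signChangeCount]

lemma cyclicDelta_ne_zero (i : Fin n) : cyclicDelta n i ≠ 0 := by
  unfold cyclicDelta; split_ifs <;> norm_num

lemma frequently_cyclicN_eq {z σ : Fin n → ℝ} (hσ : ∀ i, σ i ≠ 0)
    (hσz : ∀ i, z i ≠ 0 → 0 < z i * σ i) :
    ∃ᶠ y in 𝓝[cyclicLambda n] z, cyclicN n y = cyclicN n σ := by
  have hpos : ∀ ε : ℝ, 0 < ε → ∀ i, 0 < (z + ε • σ) i * σ i := fun ε hε i => by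
    have hzσ : 0 ≤ z i * σ i := by
      by_cases h : z i = 0
      · simp [h]
      · exact (hσz i h).le
    have := mul_pos hε (mul_self_pos.2 (hσ i))
    simp only [Pi.add_apply, Pi.smul_apply, smul_eq_mul]
    nlinarith
  have htend : Tendsto (fun ε : ℝ => z + ε • σ) (𝓝[>] 0) (𝓝[cyclicLambda n] z) := by
    refine tendsto_nhdsWithin_iff.2 ⟨?_, ?_⟩
    · have : Continuous fun ε : ℝ => z + ε • σ := by fun_prop
      simpa using (this.tendsto 0).mono_left nhdsWithin_le_nhds
    · filter_upwards [self_mem_nhdsWithin] with ε hε i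
      exact left_ne_zero_of_mul (hpos ε hε i).ne'
  refine htend.frequently (Eventually.frequently ?_)
  filter_upwards [self_mem_nhdsWithin] with ε hε
  simp only [cyclicN_eq_signChangeCount]
  exact signChangeCount_congr _ (hpos ε hε)

lemma exists_near_of_frequently_cyclicN_eq {z : Fin n → ℝ} {k : ℕ}
    (hk : ∃ᶠ y in 𝓝[cyclicLambda n] z, cyclicN n y = k) :
    ∃ y, (∀ i, y i ≠ 0) ∧ (∀ i, z i ≠ 0 → 0 < z i * y i) ∧ cyclicN n y = k := by
  obtain ⟨y, hyk, hyz, hy⟩ := (hk.and_eventually (((eventually_mul_pos_of_ne_zero z).filter_mono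
    nhdsWithin_le_nhds).and self_mem_nhdsWithin)).exists
  exact ⟨y, hy, hyz, hyk⟩

theorem cyclicNm_eq_of_forward {z σ : Fin n → ℝ} (hz : z ≠ 0) (hσ : ∀ i, σ i ≠ 0)
    (hσz : ∀ i, z i ≠ 0 → 0 < z i * σ i)
    (hfwd : ∀ i, z i = 0 → 0 < cyclicDelta n i * σ i * σ (i - 1)) :
    cyclicNm n z = cyclicN n σ := by
  have hfreq := frequently_cyclicN_eq hσ hσz
  refine le_antisymm (Nat.sInf_le hfreq) (le_csInf ⟨_, hfreq⟩ fun k hk => ?_)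
  obtain ⟨y, hy, hyz, rfl⟩ := exists_near_of_frequently_cyclicN_eq hk
  simp only [cyclicN_eq_signChangeCount]
  exact signChangeCount_le_of_forward hz hσ hσz hfwd hy hyz

theorem cyclicNM_eq_of_backward {z σ : Fin n → ℝ} (hz : z ≠ 0) (hσ : ∀ i, σ i ≠ 0)
    (hσz : ∀ i, z i ≠ 0 → 0 < z i * σ i)
    (hbwd : ∀ i, z i = 0 → cyclicDelta n i * σ i * σ (i - 1) < 0) :
    cyclicNM n z = cyclicN n σ := by
  have hfreq := frequently_cyclicN_eq hσ hσz
  have hub : ∀ k ∈ {k | ∃ᶠ y in 𝓝[cyclicLambda n] z, cyclicN n y = k}, k ≤ cyclicN n σ := by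
    intro k hk
    obtain ⟨y, hy, hyz, rfl⟩ := exists_near_of_frequently_cyclicN_eq hk
    -- Reversing the sign of `δ` turns the maximum into a minimum: `N_{-δ} = n - N_δ` on `Λ`.
    have h := signChangeCount_le_of_forward (δ := -cyclicDelta n) hz hσ hσz
      (fun i hi => by simpa [neg_mul] using hbwd i hi) hy hyz
    rw [signChangeCount_neg cyclicDelta_ne_zero hσ, signChangeCount_neg cyclicDelta_ne_zero hy]
      at h
    simp only [cyclicN_eq_signChangeCount]
    have := signChangeCount_le (cyclicDelta n) y
    have := signChangeCount_le (cyclicDelta n) σ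
    omega
  exact le_antisymm (csSup_le ⟨_, hfreq⟩ hub) (le_csSup ⟨_, hub⟩ hfreq)

lemma cyclicNm_eq_cyclicN {w : Fin n → ℝ} (hw : w ∈ cyclicLambda n) :
    cyclicNm n w = cyclicN n w :=
  cyclicNm_eq_of_forward (Function.ne_iff.2 ⟨0, hw 0⟩) hw (fun i _ => mul_self_pos.2 (hw i))
    fun i h => absurd h (hw i)

end CyclicN

theorem ODE_solution_unique_of_eventually_lipschitzWith {E : Type*} [NormedAddCommGroup E]
    [NormedSpace ℝ E] {v : ℝ → E → E} {f g : ℝ → E} {t₀ : ℝ}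
    (hv : ∀ t, ∃ K, ∀ᶠ s in 𝓝 t, LipschitzWith K (v s))
    (hf : ∀ t, HasDerivAt f (v t (f t)) t) (hg : ∀ t, HasDerivAt g (v t (g t)) t)
    (heq : f t₀ = g t₀) : f = g := by
  have hfc : Continuous f := continuous_iff_continuousAt.2 fun t => (hf t).continuousAt
  have hgc : Continuous g := continuous_iff_continuousAt.2 fun t => (hg t).continuousAt
  have hopen : IsOpen {t | f t = g t} := isOpen_iff_mem_nhds.2 fun t ht => by
    obtain ⟨K, hK⟩ := hv t
    exact ODE_solution_unique_of_eventually (s := fun _ => Set.univ)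
      (hK.mono fun _ h => h.lipschitzOnWith) (.of_forall fun s => ⟨hf s, trivial⟩)
      (.of_forall fun s => ⟨hg s, trivial⟩) ht
  have := IsClopen.eq_univ ⟨isClosed_eq hfc hgc, hopen⟩ ⟨t₀, heq⟩
  exact funext fun t => (Set.eq_univ_iff_forall.1 this t :)

lemma eventually_nhdsGT_lt_of_hasDerivAt {f f' : ℝ → ℝ} {a : ℝ}
    (hf : ∀ t, HasDerivAt f (f' t) t) (hf' : ∀ᶠ t in 𝓝[>] a, 0 < f' t) :
    ∀ᶠ t in 𝓝[>] a, f a < f t := by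
  obtain ⟨b, hab, hb⟩ := mem_nhdsGT_iff_exists_Ioo_subset.1 hf'
  have hmono : StrictMonoOn f (Set.Icc a b) :=
    strictMonoOn_of_hasDerivWithinAt_pos (convex_Icc a b)
      (HasDerivAt.continuousOn fun t _ => hf t) (fun t _ => (hf t).hasDerivWithinAt)
      (by rw [interior_Icc]; exact fun t ht => hb ht)
  filter_upwards [Ioo_mem_nhdsGT hab] with t ht
  exact hmono (Set.left_mem_Icc.2 (le_of_lt hab)) (Set.Ioo_subset_Icc_self ht) ht.1

lemma eventually_nhdsLT_lt_of_hasDerivAt {f f' : ℝ → ℝ} {a : ℝ}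
    (hf : ∀ t, HasDerivAt f (f' t) t) (hf' : ∀ᶠ t in 𝓝[<] a, 0 < f' t) :
    ∀ᶠ t in 𝓝[<] a, f t < f a := by
  obtain ⟨b, hba, hb⟩ := mem_nhdsLT_iff_exists_Ioo_subset.1 hf'
  have hmono : StrictMonoOn f (Set.Icc b a) :=
    strictMonoOn_of_hasDerivWithinAt_pos (convex_Icc b a)
      (HasDerivAt.continuousOn fun t _ => hf t) (fun t _ => (hf t).hasDerivWithinAt)
      (by rw [interior_Icc]; exact fun t ht => hb ht)
  filter_upwards [Ioo_mem_nhdsLT hba] with t ht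
  exact hmono (Set.Ioo_subset_Icc_self ht) (Set.right_mem_Icc.2 (le_of_lt hba)) ht.2

section ScalarLinearODE

variable {u a b : ℝ → ℝ}

lemma hasDerivAt_exp_neg_integral_mul (t₀ : ℝ) (ha : Continuous a)
    (hu : ∀ t, HasDerivAt u (a t * u t + b t) t) (t : ℝ) :
    HasDerivAt (fun t => Real.exp (-∫ s in t₀..t, a s) * u t)
      (Real.exp (-∫ s in t₀..t, a s) * b t) t := by
  have hA : HasDerivAt (fun t => -∫ s in t₀..t, a s) (-a t) t :=
    (ha.integral_hasStrictDerivAt t₀ t).hasDerivAt.neg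
  exact (hA.exp.mul (hu t)).congr_deriv (by ring)

lemma eventually_nhdsGT_pos_of_hasDerivAt_mul_add {t₀ : ℝ} (ha : Continuous a)
    (hu : ∀ t, HasDerivAt u (a t * u t + b t) t) (hu₀ : u t₀ = 0)
    (hb : ∀ᶠ t in 𝓝[>] t₀, 0 < b t) : ∀ᶠ t in 𝓝[>] t₀, 0 < u t := by
  have h := eventually_nhdsGT_lt_of_hasDerivAt (hasDerivAt_exp_neg_integral_mul t₀ ha hu)
    (hb.mono fun t ht => mul_pos (Real.exp_pos _) ht)
  simp only [hu₀, mul_zero] at h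
  exact h.mono fun t ht => (mul_pos_iff_of_pos_left (Real.exp_pos _)).1 ht

lemma eventually_nhdsLT_neg_of_hasDerivAt_mul_add {t₀ : ℝ} (ha : Continuous a)
    (hu : ∀ t, HasDerivAt u (a t * u t + b t) t) (hu₀ : u t₀ = 0)
    (hb : ∀ᶠ t in 𝓝[<] t₀, 0 < b t) : ∀ᶠ t in 𝓝[<] t₀, u t < 0 := by
  have h := eventually_nhdsLT_lt_of_hasDerivAt (hasDerivAt_exp_neg_integral_mul t₀ ha hu)
    (hb.mono fun t ht => mul_pos (Real.exp_pos _) ht)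
  simp only [hu₀, mul_zero] at h
  exact h.mono fun t ht => (pos_iff_neg_of_mul_neg ht).1 (Real.exp_pos _)

end ScalarLinearODE

namespace LinCNF

variable {n : ℕ} [NeZero n] (S : LinCNF n)

def vectorField (t : ℝ) (y : Fin n → ℝ) : Fin n → ℝ :=
  fun i => S.diag t i * y i + S.sub t i * y (i - 1)

lemma lipschitzWith_vectorField {t C : ℝ} (hC : ∀ i, |S.diag t i| + |S.sub t i| ≤ C) :
    LipschitzWith C.toNNReal (S.vectorField t) := by
  have hC0 : 0 ≤ C := (by positivity : (0 : ℝ) ≤ |S.diag t 0| + |S.sub t 0|).trans (hC 0)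
  refine LipschitzWith.of_dist_le_mul fun y z => ?_
  rw [Real.coe_toNNReal _ hC0]
  refine (dist_pi_le_iff (by positivity)).2 fun i => ?_
  have h1 := dist_le_pi_dist y z i
  have h2 := dist_le_pi_dist y z (i - 1)
  rw [Real.dist_eq] at h1 h2 ⊢
  calc |S.vectorField t y i - S.vectorField t z i|
      = |S.diag t i * (y i - z i) + S.sub t i * (y (i - 1) - z (i - 1))| := by
        simp only [vectorField]; ring_nf
    _ ≤ |S.diag t i| * dist y z + |S.sub t i| * dist y z := by
        refine (abs_add_le _ _).trans (add_le_add ?_ ?_) <;> rw [abs_mul] <;>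
          exact mul_le_mul_of_nonneg_left ‹_› (abs_nonneg _)
    _ ≤ C * dist y z := by rw [← add_mul]; exact mul_le_mul_of_nonneg_right (hC i) dist_nonneg

lemma exists_eventually_lipschitzWith_vectorField (t₀ : ℝ) :
    ∃ K, ∀ᶠ t in 𝓝 t₀, LipschitzWith K (S.vectorField t) := by
  set C := ∑ i, (|S.diag t₀ i| + |S.sub t₀ i| + 1)
  have hnear : ∀ᶠ t in 𝓝 t₀, ∀ i, |S.diag t i| + |S.sub t i| < |S.diag t₀ i| + |S.sub t₀ i| + 1 :=
    eventually_all.2 fun i => by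
      have hcont : Continuous fun t => |S.diag t i| + |S.sub t i| :=
        (S.cont_diag i).abs.add (S.cont_sub i).abs
      exact (hcont.tendsto t₀).eventually (gt_mem_nhds (lt_add_one _))
  refine ⟨C.toNNReal, hnear.mono fun t ht =>
    S.lipschitzWith_vectorField fun i => (ht i).le.trans ?_⟩
  exact single_le_sum (f := fun i => |S.diag t₀ i| + |S.sub t₀ i| + 1)
    (fun j _ => by positivity) (Finset.mem_univ i)

lemma delta_mul_sub_pos (t : ℝ) (j : Fin n) : 0 < cyclicDelta n j * S.sub t j := by
  unfold cyclicDelta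
  split_ifs with h
  · subst h; linarith [S.sub_neg t]
  · simpa using S.sub_pos t j h

end LinCNF

namespace LinCNF.IsSolution

variable {n : ℕ} [NeZero n] {S : LinCNF n} {x : ℝ → Fin n → ℝ}

lemma hasDerivAt_s19 (hsol : S.IsSolution x) (t : ℝ) : HasDerivAt x (S.vectorField t (x t)) t :=
  hasDerivAt_pi.2 fun i => hsol t i

lemma continuous_s19 (hsol : S.IsSolution x) : Continuous x :=
  continuous_iff_continuousAt.2 fun t => (hsol.hasDerivAt_s19 t).continuousAt

lemma ne_zero (hsol : S.IsSolution x) (hnontriv : ¬ ∀ t, x t = 0) (t : ℝ) : x t ≠ 0 := by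
  intro ht
  have hzero : S.IsSolution fun _ => 0 := fun t i => by
    simpa using hasDerivAt_const t (0 : ℝ)
  exact hnontriv (congr_fun (ODE_solution_unique_of_eventually_lipschitzWith
    S.exists_eventually_lipschitzWith_vectorField hsol.hasDerivAt_s19 hzero.hasDerivAt_s19 ht))

lemma eventually_nhdsGT_delta_mul_pos (hsol : S.IsSolution x) {t₀ s : ℝ} {j : Fin n}
    (hj : x t₀ j = 0) (hs : ∀ᶠ t in 𝓝[>] t₀, 0 < s * x t (j - 1)) :
    ∀ᶠ t in 𝓝[>] t₀, 0 < cyclicDelta n j * s * x t j :=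
  eventually_nhdsGT_pos_of_hasDerivAt_mul_add (S.cont_diag j)
    (b := fun t => cyclicDelta n j * s * (S.sub t j * x t (j - 1)))
    (fun t => ((hsol t j).const_mul (cyclicDelta n j * s)).congr_deriv (by ring)) (by simp [hj])
    (hs.mono fun t ht => by
      calc 0 < cyclicDelta n j * S.sub t j * (s * x t (j - 1)) :=
            mul_pos (S.delta_mul_sub_pos t j) ht
        _ = _ := by ring)

lemma eventually_nhdsLT_delta_mul_neg (hsol : S.IsSolution x) {t₀ s : ℝ} {j : Fin n}
    (hj : x t₀ j = 0) (hs : ∀ᶠ t in 𝓝[<] t₀, 0 < s * x t (j - 1)) :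
    ∀ᶠ t in 𝓝[<] t₀, cyclicDelta n j * s * x t j < 0 :=
  eventually_nhdsLT_neg_of_hasDerivAt_mul_add (S.cont_diag j)
    (b := fun t => cyclicDelta n j * s * (S.sub t j * x t (j - 1)))
    (fun t => ((hsol t j).const_mul (cyclicDelta n j * s)).congr_deriv (by ring)) (by simp [hj])
    (hs.mono fun t ht => by
      calc 0 < cyclicDelta n j * S.sub t j * (s * x t (j - 1)) :=
            mul_pos (S.delta_mul_sub_pos t j) ht
        _ = _ := by ring)

lemma eventually_mul_pos (hsol : S.IsSolution x) (t₀ : ℝ) :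
    ∀ᶠ t in 𝓝 t₀, ∀ i, x t₀ i ≠ 0 → 0 < x t₀ i * x t i :=
  (hsol.continuous_s19.tendsto t₀).eventually (eventually_mul_pos_of_ne_zero (x t₀))

theorem exists_eventually_sign (hsol : S.IsSolution x) {t₀ : ℝ} (hx : x t₀ ≠ 0) (i : Fin n) :
    (∃ s, ∀ᶠ t in 𝓝[>] t₀, 0 < s * x t i) ∧ (∃ s, ∀ᶠ t in 𝓝[<] t₀, 0 < s * x t i) := by
  obtain ⟨i₀, hi₀⟩ := Function.ne_iff.1 hx
  have hnear := hsol.eventually_mul_pos t₀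
  have hcont : ∀ j, x t₀ j ≠ 0 →
      (∃ s, ∀ᶠ t in 𝓝[>] t₀, 0 < s * x t j) ∧ (∃ s, ∀ᶠ t in 𝓝[<] t₀, 0 < s * x t j) :=
    fun j hj => ⟨⟨_, (hnear.filter_mono nhdsWithin_le_nhds).mono fun _ h => h j hj⟩,
      ⟨_, (hnear.filter_mono nhdsWithin_le_nhds).mono fun _ h => h j hj⟩⟩
  refine Fin.cyclic_induction (P := fun j => (∃ s, ∀ᶠ t in 𝓝[>] t₀, 0 < s * x t j) ∧
    (∃ s, ∀ᶠ t in 𝓝[<] t₀, 0 < s * x t j)) i₀ (hcont i₀ hi₀) (fun j ⟨⟨s, hs⟩, ⟨s', hs'⟩⟩ => ?_) i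
  by_cases hj : x t₀ (j + 1) = 0
  · rw [← add_sub_cancel_right j 1] at hs hs'
    exact ⟨⟨_, hsol.eventually_nhdsGT_delta_mul_pos hj hs⟩,
      ⟨-(cyclicDelta n (j + 1) * s'),
        (hsol.eventually_nhdsLT_delta_mul_neg hj hs').mono fun t ht => by linarith⟩⟩
  · exact hcont _ hj

theorem eventually_nhdsGT_forward (hsol : S.IsSolution x) {t₀ : ℝ} (hx : x t₀ ≠ 0) :
    ∀ᶠ t in 𝓝[>] t₀, (∀ i, x t i ≠ 0) ∧ (∀ i, x t₀ i ≠ 0 → 0 < x t₀ i * x t i) ∧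
      ∀ i, x t₀ i = 0 → 0 < cyclicDelta n i * x t i * x t (i - 1) := by
  refine (eventually_all.2 fun i => ?_).and
    (((hsol.eventually_mul_pos t₀).filter_mono nhdsWithin_le_nhds).and
      (eventually_all.2 fun i => ?_))
  · obtain ⟨s, hs⟩ := (hsol.exists_eventually_sign hx i).1
    exact hs.mono fun t ht => right_ne_zero_of_mul ht.ne'
  · by_cases hi : x t₀ i = 0
    · obtain ⟨s, hs⟩ := (hsol.exists_eventually_sign hx (i - 1)).1
      filter_upwards [hsol.eventually_nhdsGT_delta_mul_pos hi hs, hs] with t h1 h2 _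
      exact mul_mul_pos_of_mul_pos_of_mul_pos h1 h2
    · exact .of_forall fun _ h => absurd h hi

theorem eventually_nhdsLT_backward (hsol : S.IsSolution x) {t₀ : ℝ} (hx : x t₀ ≠ 0) :
    ∀ᶠ t in 𝓝[<] t₀, (∀ i, x t i ≠ 0) ∧ (∀ i, x t₀ i ≠ 0 → 0 < x t₀ i * x t i) ∧
      ∀ i, x t₀ i = 0 → cyclicDelta n i * x t i * x t (i - 1) < 0 := by
  refine (eventually_all.2 fun i => ?_).and
    (((hsol.eventually_mul_pos t₀).filter_mono nhdsWithin_le_nhds).and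
      (eventually_all.2 fun i => ?_))
  · obtain ⟨s, hs⟩ := (hsol.exists_eventually_sign hx i).2
    exact hs.mono fun t ht => right_ne_zero_of_mul ht.ne'
  · by_cases hi : x t₀ i = 0
    · obtain ⟨s, hs⟩ := (hsol.exists_eventually_sign hx (i - 1)).2
      filter_upwards [hsol.eventually_nhdsLT_delta_mul_neg hi hs, hs] with t h1 h2 _
      have := mul_mul_pos_of_mul_pos_of_mul_pos (d := -cyclicDelta n i) (a := x t i)
        (by linarith) h2
      linarith
    · exact .of_forall fun _ h => absurd h hi

theorem eventually_nhdsGT_cyclicNm_eq (hsol : S.IsSolution x) {t₀ : ℝ} (hx : x t₀ ≠ 0) :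
    ∀ᶠ t in 𝓝[>] t₀, cyclicNm n (x t) = cyclicNm n (x t₀) :=
  (hsol.eventually_nhdsGT_forward hx).mono fun _ ⟨h1, h2, h3⟩ =>
    (cyclicNm_eq_cyclicN h1).trans (cyclicNm_eq_of_forward hx h1 h2 h3).symm

theorem eventually_nhdsLT_cyclicNm_eq (hsol : S.IsSolution x) {t₀ : ℝ} (hx : x t₀ ≠ 0) :
    ∀ᶠ t in 𝓝[<] t₀, cyclicNm n (x t) = cyclicNM n (x t₀) :=
  (hsol.eventually_nhdsLT_backward hx).mono fun _ ⟨h1, h2, h3⟩ =>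
    (cyclicNm_eq_cyclicN h1).trans (cyclicNM_eq_of_backward hx h1 h2 h3).symm

theorem cyclicNm_le_cyclicNM (hsol : S.IsSolution x) {t₀ : ℝ} (hx : x t₀ ≠ 0) :
    cyclicNm n (x t₀) ≤ cyclicNM n (x t₀) := by
  obtain ⟨t, h1, h2, h3⟩ := (hsol.eventually_nhdsLT_backward hx).exists
  exact (Nat.sInf_le (frequently_cyclicN_eq h1 h2)).trans (cyclicNM_eq_of_backward hx h1 h2 h3).ge

theorem eventually_cyclicNm_le (hsol : S.IsSolution x) {t₀ : ℝ} (hx : x t₀ ≠ 0) :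
    ∀ᶠ t in 𝓝 t₀, cyclicNm n (x t₀) ≤ cyclicNm n (x t) := by
  rw [← nhdsNE_sup_pure, ← nhdsLT_sup_nhdsGT]
  refine ⟨⟨?_, ?_⟩, le_refl (cyclicNm n (x t₀))⟩
  · exact (hsol.eventually_nhdsLT_cyclicNm_eq hx).mono fun _ h =>
      (hsol.cyclicNm_le_cyclicNM hx).trans h.ge
  · exact (hsol.eventually_nhdsGT_cyclicNm_eq hx).mono fun _ h => h.ge

end LinCNF.IsSolution

theorem antitone_of_lowerSemicontinuous {α β : Type*} [ConditionallyCompleteLinearOrder α]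
    [TopologicalSpace α] [OrderTopology α] [DenselyOrdered α] [LinearOrder β] {f : α → β}
    (hf : LowerSemicontinuous f) (hright : ∀ a, ∀ᶠ t in 𝓝[>] a, f t ≤ f a) : Antitone f := by
  intro a b hab
  have hsub : Set.Icc a b ⊆ f ⁻¹' Set.Iic (f a) :=
    ((hf.isClosed_preimage (f a)).inter isClosed_Icc).Icc_subset_of_forall_mem_nhdsWithin le_rfl
      fun t ht => (hright t).mono fun _ h => h.trans ht.1
  exact hsub ⟨hab, le_rfl⟩

theorem Antitone.eq_of_periodic {β : Type*} [PartialOrder β] {f : ℝ → β} (hf : Antitone f)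
    {ω : ℝ} (hω : 0 < ω) (hper : Function.Periodic f ω) (s t : ℝ) : f s = f t := by
  wlog hst : s ≤ t generalizing s t
  · exact (this t s (le_of_not_ge hst)).symm
  obtain ⟨k, hk⟩ := Archimedean.arch (t - s) hω
  refine le_antisymm ?_ (hf hst)
  calc f s = f (s + k * ω) := ((hper.nat_mul k) s).symm
    _ ≤ f t := hf (by rw [nsmul_eq_mul] at hk; linarith)

theorem stmt19_general (n : ℕ) [NeZero n] (S : LinCNF n) (x : ℝ → Fin n → ℝ)
    (hsol : S.IsSolution x) (hnontriv : ¬ ∀ t, x t = 0)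
    (ω : ℝ) (hω : 0 < ω) (hper : ∀ t, x (t + ω) = x t) :
    (∀ t : ℝ, x t ∈ cyclicGood n) ∧
    (∀ s t : ℝ, cyclicNm n (x s) = cyclicNm n (x t)) := by
  have hx := hsol.ne_zero hnontriv
  have hlsc : LowerSemicontinuous fun t => cyclicNm n (x t) := fun t _ hk =>
    (hsol.eventually_cyclicNm_le (hx t)).mono fun _ h => hk.trans_le h
  have hanti : Antitone fun t => cyclicNm n (x t) := antitone_of_lowerSemicontinuous hlsc
    fun t => (hsol.eventually_nhdsGT_cyclicNm_eq (hx t)).mono fun _ h => h.le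
  have hconst := hanti.eq_of_periodic hω fun t => by simp only [hper]
  refine ⟨fun t => ?_, hconst⟩
  obtain ⟨s, hs⟩ := (hsol.eventually_nhdsLT_cyclicNm_eq (hx t)).exists
  exact (hconst t s).trans hs

/-- A nontrivial periodic solution of the linear cyclic
negative feedback system lies in `𝒩` for all times and `N` is constant along it. -/
theorem stmt19 (n : ℕ) [NeZero n] (hn : 2 ≤ n) (S : LinCNF n) (x : ℝ → Fin n → ℝ)
    (hsol : S.IsSolution x) (hnontriv : ¬ ∀ t, x t = 0)
    (ω : ℝ) (hω : 0 < ω) (hper : ∀ t, x (t + ω) = x t) :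
    (∀ t : ℝ, x t ∈ cyclicGood n) ∧
    (∀ s t : ℝ, cyclicNm n (x s) = cyclicNm n (x t)) :=
  stmt19_general n S x hsol hnontriv ω hω hper
end
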